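/- arXiv:1810.11569 — 10 statements merged into one kernel-verified Lean document; each statement's English description precedes it below -/
import Mathlib

section
/- Let G be a countable discrete group admitting an inner amenability sequence, let K be a compact metrizable topological group, let α : G → K be a group homomorphism, and let V₁ ⊇ V₂ ⊇ ⋯ be a decreasing sequence of open neighborhoods of the identity of K. Then there exists an inner amenability sequence (ξ_n) for G such that for every n, ξ_n vanishes outside α⁻¹(V_n). (Group case of the theorem on inner amenability sequences supported near the identity of a compact group.) -/
open Filter Topology

/-- An inner amenability sequence for a countable discrete group `G`: a sequence `ξ n` of
nonnegative summable functions on `G` of total mass `1` such that for every `g ∈ G` the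
conjugated functions `(ξ n)^g : h ↦ ξ n (g * h * g⁻¹)` satisfy `‖(ξ n)^g - ξ n‖₁ → 0`
and `ξ n g → 0`. -/
def InnerAmenabilitySeq {G : Type*} [Group G] (ξ : ℕ → G → ℝ) : Prop :=
  (∀ n g, 0 ≤ ξ n g) ∧
  (∀ n, HasSum (ξ n) 1) ∧
  (∀ g : G, Tendsto (fun n => ∑' h : G, |ξ n (g * h * g⁻¹) - ξ n h|) atTop (𝓝 0)) ∧
  (∀ g : G, Tendsto (fun n => ξ n g) atTop (𝓝 0))

/-!
The correlation `ζ x = ∑' h, η a (x * h) * η b h` of two members of an inner amenability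
sequence is again a probability vector, it is as conjugation invariant as `η a` and `η b` are,
and it is pointwise small once `a` is large compared to `b`. Cover the compact group `K` by `N`
sets `P` with `P * P⁻¹` inside a conjugation-invariant neighbourhood `W ⊆ V n` of `1`. By
pigeonhole one such `P` has `η m`-mass at least `1 / N` on `α⁻¹' P` for infinitely many `m`;
choosing `a` and `b` among these `m`, `ζ` has mass at least `1 / N ^ 2` on `α⁻¹' W`. Restricting
`ζ` to the conjugation-invariant set `α⁻¹' W` and renormalizing costs at most a factor `N ^ 2`
in both estimates.
-/

section Correlation

variable {G : Type*} [Group G]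

def mulShear : G × G ≃ G × G where
  toFun p := (p.1 * p.2, p.2)
  invFun p := (p.1 * p.2⁻¹, p.2)
  left_inv _ := by simp
  right_inv _ := by simp

noncomputable def correlation (u v : G → ℝ) (x : G) : ℝ := ∑' h, u (x * h) * v h

noncomputable def conjDefect (u : G → ℝ) (g : G) : ℝ := ∑' h, |u (g * h * g⁻¹) - u h|

variable {u u' v v' : G → ℝ}

theorem hasSum_mul_comp_mulShear (hu : Summable u) (hv : Summable v) :
    HasSum (fun p : G × G => u (p.1 * p.2) * v p.2) ((∑' x, u x) * ∑' x, v x) := by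
  rw [tsum_mul_tsum_of_summable_norm hu.norm hv.norm]
  exact (mulShear.hasSum_iff (f := fun q : G × G => u q.1 * v q.2)).mpr
    (summable_mul_of_summable_norm hu.norm hv.norm).hasSum

theorem summable_mul_shift (hu : Summable u) (hv : Summable v) (x : G) :
    Summable fun h => u (x * h) * v h :=
  (hasSum_mul_comp_mulShear hu hv).summable.prod_factor x

theorem hasSum_correlation (hu : Summable u) (hv : Summable v) :
    HasSum (correlation u v) ((∑' x, u x) * ∑' x, v x) :=
  (hasSum_mul_comp_mulShear hu hv).prod_fiberwise fun x => (summable_mul_shift hu hv x).hasSum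

theorem correlation_nonneg (hu : 0 ≤ u) (hv : 0 ≤ v) : 0 ≤ correlation u v :=
  fun _ => tsum_nonneg fun _ => mul_nonneg (hu _) (hv _)

theorem correlation_mono (hu' : 0 ≤ u') (hv' : 0 ≤ v') (huu : u' ≤ u) (hvv : v' ≤ v)
    (hu : Summable u) (hv : Summable v) : correlation u' v' ≤ correlation u v := fun x =>
  Summable.tsum_le_tsum (fun h => mul_le_mul (huu _) (hvv h) (hv' h) ((hu' _).trans (huu _)))
    (summable_mul_shift (hu.of_nonneg_of_le hu' huu) (hv.of_nonneg_of_le hv' hvv) x)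
    (summable_mul_shift hu hv x)

theorem correlation_comp_mulEquiv (φ : G ≃* G) (x : G) :
    correlation (u ∘ φ) (v ∘ φ) x = correlation u v (φ x) := by
  simp only [correlation, Function.comp_apply, map_mul]
  exact φ.toEquiv.tsum_eq fun h => u (φ x * h) * v h

theorem abs_correlation_sub_correlation_le (hu : Summable u) (hu' : Summable u')
    (hv : Summable v) (hv' : Summable v') (x : G) :
    |correlation u' v' x - correlation u v x| ≤
      correlation (fun y => |u' y - u y|) (fun y => |v' y|) x +
        correlation (fun y => |u y|) (fun y => |v' y - v y|) x := by
  have hs := summable_mul_shift hu hv x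
  have hs' := summable_mul_shift hu' hv' x
  have h₁ := summable_mul_shift (hu'.sub hu).abs hv'.abs x
  have h₂ := summable_mul_shift hu.abs (hv'.sub hv).abs x
  rw [correlation, correlation, ← hs'.tsum_sub hs, correlation, correlation, ← h₁.tsum_add h₂]
  refine (norm_tsum_le_tsum_norm (hs'.sub hs).norm).trans
    (Summable.tsum_le_tsum (fun h => ?_) (hs'.sub hs).abs (h₁.add h₂))
  calc |u' (x * h) * v' h - u (x * h) * v h|
      = |(u' (x * h) - u (x * h)) * v' h + u (x * h) * (v' h - v h)| := by congr 1; ring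
    _ ≤ _ := by rw [← abs_mul, ← abs_mul]; exact abs_add_le _ _

theorem tsum_abs_correlation_sub_correlation_le (hu : Summable u) (hu' : Summable u')
    (hv : Summable v) (hv' : Summable v') :
    ∑' x, |correlation u' v' x - correlation u v x| ≤
      (∑' y, |u' y - u y|) * (∑' y, |v' y|) + (∑' y, |u y|) * ∑' y, |v' y - v y| := by
  have h₁ := hasSum_correlation (hu'.sub hu).abs hv'.abs
  have h₂ := hasSum_correlation hu.abs (hv'.sub hv).abs
  rw [← h₁.tsum_eq, ← h₂.tsum_eq, ← h₁.summable.tsum_add h₂.summable]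
  exact Summable.tsum_le_tsum (abs_correlation_sub_correlation_le hu hu' hv hv')
    ((hasSum_correlation hu' hv').summable.sub (hasSum_correlation hu hv).summable).abs
    (h₁.summable.add h₂.summable)

theorem conjDefect_correlation_le (hu : Summable u) (hv : Summable v) (g : G) :
    conjDefect (correlation u v) g ≤
      conjDefect u g * (∑' x, |v x|) + (∑' x, |u x|) * conjDefect v g := by
  let c := MulAut.conj g
  have hc (w : G → ℝ) : ∑' x, |w (c x)| = ∑' x, |w x| := c.toEquiv.tsum_eq fun x => |w x|
  have hu' : Summable (u ∘ c) := c.toEquiv.summable_iff.mpr hu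
  have hv' : Summable (v ∘ c) := c.toEquiv.summable_iff.mpr hv
  have key := tsum_abs_correlation_sub_correlation_le hu hu' hv hv'
  simp only [correlation_comp_mulEquiv, Function.comp_apply, hc] at key
  simpa only [conjDefect, c, MulAut.conj_apply] using key

theorem conjDefect_correlation_le_add (hu : 0 ≤ u) (hv : 0 ≤ v) (hu1 : HasSum u 1)
    (hv1 : HasSum v 1) (g : G) :
    conjDefect (correlation u v) g ≤ conjDefect u g + conjDefect v g := by
  have h := conjDefect_correlation_le hu1.summable hv1.summable g
  simp_rw [abs_of_nonneg (hu _), abs_of_nonneg (hv _), hu1.tsum_eq, hv1.tsum_eq] at h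
  simpa using h

theorem summable_abs_conj_sub (hu : Summable u) (g : G) :
    Summable fun h => |u (g * h * g⁻¹) - u h| :=
  (((MulAut.conj g).toEquiv.summable_iff.mpr hu).sub hu).abs

theorem tendsto_correlation_zero {ι : Type*} {l : Filter ι} {w : ι → G → ℝ} {C : ℝ}
    (hC : ∀ i y, |w i y| ≤ C) (hw : ∀ y, Tendsto (fun i => w i y) l (𝓝 0)) (hv : Summable v)
    (x : G) : Tendsto (fun i => correlation (w i) v x) l (𝓝 0) := by
  have := tendsto_tsum_of_dominated_convergence (f := fun i h => w i (x * h) * v h)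
    (g := fun _ => 0) (hv.abs.mul_left C) (fun h => by simpa using (hw (x * h)).mul_const (v h))
    (Eventually.of_forall fun i h => by
      rw [Real.norm_eq_abs, abs_mul]
      exact mul_le_mul_of_nonneg_right (hC i _) (abs_nonneg _))
  rwa [tsum_zero] at this

theorem correlation_indicator_of_notMem {S P : Set G} (hPS : ∀ x ∈ P, ∀ y ∈ P, x * y⁻¹ ∈ S)
    {x : G} (hx : x ∉ S) : correlation (P.indicator u) (P.indicator v) x = 0 := by
  have hterm (h : G) : P.indicator u (x * h) * P.indicator v h = 0 := by
    by_cases h₁ : x * h ∈ P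
    · by_cases h₂ : h ∈ P
      · exact absurd (by simpa using hPS _ h₁ _ h₂) hx
      · simp [h₂]
    · simp [h₁]
  simp [correlation, hterm]

theorem tsum_indicator_mul_le_tsum_indicator_correlation {S P : Set G}
    (hPS : ∀ x ∈ P, ∀ y ∈ P, x * y⁻¹ ∈ S) (hu : 0 ≤ u) (hv : 0 ≤ v) (hus : Summable u)
    (hvs : Summable v) :
    (∑' x, P.indicator u x) * ∑' x, P.indicator v x ≤ ∑' x, S.indicator (correlation u v) x := by
  have huP : 0 ≤ P.indicator u := Set.indicator_nonneg fun y _ => hu y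
  have hvP : 0 ≤ P.indicator v := Set.indicator_nonneg fun y _ => hv y
  have hP := hasSum_correlation (hus.indicator P) (hvs.indicator P)
  calc (∑' x, P.indicator u x) * ∑' x, P.indicator v x
      = ∑' x, S.indicator (correlation (P.indicator u) (P.indicator v)) x := by
        rw [← hP.tsum_eq, Set.indicator_eq_self.mpr fun x hx =>
          by_contra fun hxS => hx (correlation_indicator_of_notMem hPS hxS)]
    _ ≤ ∑' x, S.indicator (correlation u v) x :=
        Summable.tsum_le_tsum
          (fun x => Set.indicator_le_indicator (correlation_mono huP hvP
            (Set.indicator_le_self' fun y _ => hu y) (Set.indicator_le_self' fun y _ => hv y)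
            hus hvs x))
          (hP.summable.indicator S) ((hasSum_correlation hus hvs).summable.indicator S)

end Correlation

theorem exists_le_tsum_indicator_of_cover {α ι : Type*} {u : α → ℝ} (hu : 0 ≤ u)
    (hu1 : HasSum u 1) {t : Finset ι} {A : ι → Set α} (hA : ∀ x, ∃ i ∈ t, x ∈ A i) :
    ∃ i ∈ t, 1 / (t.card : ℝ) ≤ ∑' x, (A i).indicator u x := by
  have hAs (i : ι) : Summable ((A i).indicator u) := hu1.summable.indicator _
  have hmass : 1 ≤ ∑ i ∈ t, ∑' x, (A i).indicator u x := by
    rw [← Summable.tsum_finsetSum fun i _ => hAs i, ← hu1.tsum_eq]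
    refine Summable.tsum_le_tsum (fun x => ?_) hu1.summable (summable_sum fun i _ => hAs i)
    obtain ⟨i, hi, hx⟩ := hA x
    calc u x = (A i).indicator u x := (Set.indicator_of_mem hx u).symm
      _ ≤ _ := Finset.single_le_sum (fun j _ => Set.indicator_nonneg (fun y _ => hu y) x) hi
  have ht : t.Nonempty := Finset.nonempty_of_sum_ne_zero (one_pos.trans_le hmass).ne'
  refine Finset.exists_le_of_sum_le ht ?_
  rwa [Finset.sum_const, nsmul_eq_mul, mul_one_div_cancel (by positivity)]

theorem exists_normalized_indicator {G : Type*} [Group G] {ζ : G → ℝ} {S : Set G} (hζ : 0 ≤ ζ)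
    (hζs : Summable ζ) (hS : ∀ g x, g * x * g⁻¹ ∈ S ↔ x ∈ S) {c : ℝ} (hc0 : 0 < c)
    (hc : c ≤ ∑' x, S.indicator ζ x) :
    ∃ ξ : G → ℝ, 0 ≤ ξ ∧ HasSum ξ 1 ∧ (∀ x ∉ S, ξ x = 0) ∧ (∀ x, ξ x ≤ ζ x / c) ∧
      ∀ g, conjDefect ξ g ≤ conjDefect ζ g / c := by
  set m := ∑' x, S.indicator ζ x
  have hm : 0 < m := hc0.trans_le hc
  have hSs : Summable (S.indicator ζ) := hζs.indicator S
  refine ⟨fun x => S.indicator ζ x / m, fun x => div_nonneg (Set.indicator_nonneg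
    (fun y _ => hζ y) x) hm.le, ?_, fun x hx => by simp [hx], fun x => ?_, fun g => ?_⟩
  · have := hSs.hasSum.div_const m
    rwa [div_self hm.ne'] at this
  · calc S.indicator ζ x / m ≤ ζ x / m := by
          gcongr; exact Set.indicator_le_self' (fun y _ => hζ y) x
      _ ≤ ζ x / c := div_le_div_of_nonneg_left (hζ x) hc0 hc
  · have hpt (x : G) : |S.indicator ζ (g * x * g⁻¹) / m - S.indicator ζ x / m| ≤
        |ζ (g * x * g⁻¹) - ζ x| / m := by
      rw [← sub_div, abs_div, abs_of_pos hm]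
      refine div_le_div_of_nonneg_right ?_ hm.le
      by_cases hx : x ∈ S
      · simp [hx, (hS g x).2 hx]
      · simp [hx, mt (hS g x).1 hx]
    calc conjDefect (fun x => S.indicator ζ x / m) g
        ≤ ∑' x, |ζ (g * x * g⁻¹) - ζ x| / m :=
          Summable.tsum_le_tsum hpt (summable_abs_conj_sub (hSs.div_const m) g)
            ((summable_abs_conj_sub hζs g).div_const m)
      _ = conjDefect ζ g / m := tsum_div_const
      _ ≤ conjDefect ζ g / c :=
          div_le_div_of_nonneg_left (tsum_nonneg fun _ => abs_nonneg _) hc0 hc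

section CompactGroup

variable {K : Type*} [Group K] [TopologicalSpace K] [IsTopologicalGroup K] [CompactSpace K]

theorem isOpen_setOf_forall_conj_mem {V : Set K} (hV : IsOpen V) :
    IsOpen {x | ∀ k, k * x * k⁻¹ ∈ V} := by
  have hC : IsClosed {p : K × K | p.1 * p.2 * p.1⁻¹ ∉ V} :=
    hV.isClosed_compl.preimage (by fun_prop)
  convert (isClosedMap_snd_of_compactSpace _ hC).isOpen_compl using 1
  ext x
  simp

theorem exists_mem_nhds_one_conj_invariant_subset {V : Set K} (hV : V ∈ 𝓝 1) :
    ∃ W ∈ 𝓝 (1 : K), W ⊆ V ∧ ∀ k x, k * x * k⁻¹ ∈ W ↔ x ∈ W := by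
  obtain ⟨U, hUV, hU, h1⟩ := mem_nhds_iff.mp hV
  refine ⟨{x | ∀ k, k * x * k⁻¹ ∈ U},
    (isOpen_setOf_forall_conj_mem hU).mem_nhds (by simpa using h1),
    fun x hx => hUV (by simpa using hx 1), fun k x => ⟨fun h j => ?_, fun h j => ?_⟩⟩
  · simpa [mul_assoc] using h (j * k⁻¹)
  · simpa [mul_assoc] using h (j * k)

theorem exists_finset_cover_mul_inv_mem {W : Set K} (hW : W ∈ 𝓝 1)
    (hWconj : ∀ k x, k * x * k⁻¹ ∈ W ↔ x ∈ W) :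
    ∃ (t : Finset K) (P : K → Set K), (∀ x, ∃ k ∈ t, x ∈ P k) ∧
      ∀ k, ∀ x ∈ P k, ∀ y ∈ P k, x * y⁻¹ ∈ W := by
  obtain ⟨U, hU, hUW⟩ := exists_nhds_split_inv hW
  obtain ⟨t, ht⟩ := compact_covered_by_mul_left_translates isCompact_univ
    (nonempty_of_mem (interior_mem_nhds.mpr hU))
  refine ⟨t, fun k => (k * ·) ⁻¹' U, fun x => by simpa using ht (Set.mem_univ x),
    fun k x hx y hy => ?_⟩
  rw [← hWconj k]
  simpa [div_eq_mul_inv, mul_assoc] using hUW _ hx _ hy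

end CompactGroup

theorem exists_correlation_small_of_frequently {G : Type*} [Group G] {η : ℕ → G → ℝ}
    (hη : InnerAmenabilitySeq η) {Q : ℕ → Prop} (hQ : ∃ᶠ m in atTop, Q m) (F : Finset G)
    {δ : ℝ} (hδ : 0 < δ) :
    ∃ a b, Q a ∧ Q b ∧ ∀ g ∈ F,
      conjDefect (correlation (η a) (η b)) g ≤ 2 * δ ∧ correlation (η a) (η b) g ≤ δ := by
  obtain ⟨hpos, hsum, hdef, hpt⟩ := hη
  have hsmall : ∀ᶠ m in atTop, ∀ g ∈ F, conjDefect (η m) g ≤ δ :=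
    (eventually_all_finset F).mpr fun g _ => (hdef g).eventually (eventually_le_nhds hδ)
  obtain ⟨b, hb, hb_def⟩ := (hQ.and_eventually hsmall).exists
  have hcorr : ∀ᶠ m in atTop, ∀ g ∈ F, correlation (η m) (η b) g ≤ δ := by
    refine (eventually_all_finset F).mpr fun g _ => ?_
    refine (tendsto_correlation_zero (C := 1) (fun m y => ?_) hpt (hsum b).summable g).eventually
      (eventually_le_nhds hδ)
    rw [abs_of_nonneg (hpos m y)]
    exact le_hasSum (hsum m) y fun j _ => hpos m j
  obtain ⟨a, ha, ha_def, ha_corr⟩ := (hQ.and_eventually (hsmall.and hcorr)).exists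
  refine ⟨a, b, ha, hb, fun g hg => ⟨?_, ha_corr g hg⟩⟩
  linarith [conjDefect_correlation_le_add (hpos a) (hpos b) (hsum a) (hsum b) g, ha_def g hg,
    hb_def g hg]

theorem exists_supported_almost_conj_invariant {G : Type*} [Group G] {η : ℕ → G → ℝ}
    (hη : InnerAmenabilitySeq η) {S : Set G} (hS : ∀ g x, g * x * g⁻¹ ∈ S ↔ x ∈ S)
    {ι : Type*} {t : Finset ι} {A : ι → Set G} (hA : ∀ x, ∃ i ∈ t, x ∈ A i)
    (hAS : ∀ i, ∀ x ∈ A i, ∀ y ∈ A i, x * y⁻¹ ∈ S) (F : Finset G) {ε : ℝ} (hε : 0 < ε) :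
    ∃ ξ : G → ℝ, 0 ≤ ξ ∧ HasSum ξ 1 ∧ (∀ x ∉ S, ξ x = 0) ∧
      ∀ g ∈ F, conjDefect ξ g ≤ ε ∧ ξ g ≤ ε := by
  have ⟨hpos, hsum, _⟩ := hη
  obtain ⟨i, hi, hfreq⟩ :
      ∃ i ∈ t, ∃ᶠ m in atTop, 1 / (t.card : ℝ) ≤ ∑' x, (A i).indicator (η m) x :=
    (Finset.frequently_exists t).mp
      (Frequently.of_forall fun m => exists_le_tsum_indicator_of_cover (hpos m) (hsum m) hA)
  have hN : 0 < 1 / (t.card : ℝ) := one_div_pos.mpr (Nat.cast_pos.mpr (Finset.card_pos.mpr ⟨i, hi⟩))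
  set c := (1 / (t.card : ℝ)) ^ 2
  have hc : 0 < c := by positivity
  obtain ⟨a, b, ha, hb, hab⟩ :=
    exists_correlation_small_of_frequently hη hfreq F (δ := ε / 2 * c) (by positivity)
  set ζ := correlation (η a) (η b)
  have hζ1 : HasSum ζ 1 := by
    simpa [(hsum a).tsum_eq, (hsum b).tsum_eq] using
      hasSum_correlation (hsum a).summable (hsum b).summable
  have hmass : c ≤ ∑' x, S.indicator ζ x :=
    calc c ≤ (∑' x, (A i).indicator (η a) x) * ∑' x, (A i).indicator (η b) x :=
          (sq _).trans_le (mul_le_mul ha hb hN.le (hN.le.trans ha))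
      _ ≤ _ := tsum_indicator_mul_le_tsum_indicator_correlation (hAS i) (hpos a) (hpos b)
        (hsum a).summable (hsum b).summable
  obtain ⟨ξ, hξ0, hξ1, hξS, hξζ, hξdef⟩ := exists_normalized_indicator
    (correlation_nonneg (hpos a) (hpos b)) hζ1.summable hS hc hmass
  refine ⟨ξ, hξ0, hξ1, hξS, fun g hg => ⟨?_, ?_⟩⟩
  · calc conjDefect ξ g ≤ conjDefect ζ g / c := hξdef g
      _ ≤ 2 * (ε / 2 * c) / c := by gcongr; exact (hab g hg).1
      _ = ε := by field_simp
  · calc ξ g ≤ ζ g / c := hξζ g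
      _ ≤ ε / 2 * c / c := by gcongr; exact (hab g hg).2
      _ ≤ ε := by field_simp; linarith

theorem exists_supported_preimage_almost_conj_invariant {G : Type*} [Group G]
    {K : Type*} [Group K] [TopologicalSpace K] [IsTopologicalGroup K] [CompactSpace K]
    (α : G →* K) {η : ℕ → G → ℝ} (hη : InnerAmenabilitySeq η) {V : Set K} (hV : V ∈ 𝓝 1)
    (F : Finset G) {ε : ℝ} (hε : 0 < ε) :
    ∃ ξ : G → ℝ, 0 ≤ ξ ∧ HasSum ξ 1 ∧ (∀ g, α g ∉ V → ξ g = 0) ∧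
      ∀ g ∈ F, conjDefect ξ g ≤ ε ∧ ξ g ≤ ε := by
  obtain ⟨W, hW, hWV, hWconj⟩ := exists_mem_nhds_one_conj_invariant_subset hV
  obtain ⟨t, P, hcover, hP⟩ := exists_finset_cover_mul_inv_mem hW hWconj
  obtain ⟨ξ, hξ0, hξ1, hξW, hξF⟩ := exists_supported_almost_conj_invariant hη
    (S := α ⁻¹' W) (by simp [hWconj]) (A := fun k => α ⁻¹' P k) (fun x => hcover (α x))
    (fun k x hx y hy => by simpa using hP k _ hx _ hy) F hε
  exact ⟨ξ, hξ0, hξ1, fun g hg => hξW g (mt (@hWV _) hg), hξF⟩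

theorem innerAmenabilitySeq_supported_near_one_general
    {G : Type*} [Group G] [Countable G]
    {K : Type*} [Group K] [TopologicalSpace K] [IsTopologicalGroup K]
    [CompactSpace K]
    (α : G →* K) (V : ℕ → Set K)
    (hVopen : ∀ n, IsOpen (V n)) (hVmem : ∀ n, (1 : K) ∈ V n)
    (η : ℕ → G → ℝ) (hη : InnerAmenabilitySeq η) :
    ∃ ξ : ℕ → G → ℝ, InnerAmenabilitySeq ξ ∧ ∀ n g, α g ∉ V n → ξ n g = 0 := by
  classical
  obtain ⟨e, he⟩ := exists_surjective_nat G
  choose ξ hξ0 hξ1 hξV hξF using fun n : ℕ =>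
    exists_supported_preimage_almost_conj_invariant α hη ((hVopen n).mem_nhds (hVmem n))
      ((Finset.range (n + 1)).image e) Nat.one_div_pos_of_nat
  have hF (g : G) : ∀ᶠ n in atTop, g ∈ (Finset.range (n + 1)).image e := by
    obtain ⟨j, rfl⟩ := he g
    exact eventually_atTop.mpr ⟨j, fun n hn => Finset.mem_image_of_mem e (by simp; omega)⟩
  refine ⟨ξ, ⟨hξ0, hξ1, fun g => ?_, fun g => ?_⟩, hξV⟩
  · exact squeeze_zero' (.of_forall fun n => tsum_nonneg fun _ => abs_nonneg _)
      ((hF g).mono fun n hn => (hξF n g hn).1) tendsto_one_div_add_atTop_nhds_zero_nat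
  · exact squeeze_zero' (.of_forall fun n => hξ0 n g)
      ((hF g).mono fun n hn => (hξF n g hn).2) tendsto_one_div_add_atTop_nhds_zero_nat

/-- If a countable discrete group `G` admits an inner amenability sequence, `K` is a compact
metrizable topological group, `α : G → K` is a homomorphism and `V₁ ⊇ V₂ ⊇ ⋯` is a decreasing
sequence of open neighborhoods of the identity of `K`, then there is an inner amenability
sequence `(ξ n)` for `G` such that `ξ n` vanishes outside `α⁻¹ (V n)` for every `n`. -/
theorem innerAmenabilitySeq_supported_near_one
    {G : Type*} [Group G] [Countable G]
    {K : Type*} [Group K] [TopologicalSpace K] [IsTopologicalGroup K]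
    [CompactSpace K] [TopologicalSpace.MetrizableSpace K]
    (α : G →* K) (V : ℕ → Set K)
    (hVopen : ∀ n, IsOpen (V n)) (hVmem : ∀ n, (1 : K) ∈ V n)
    (hVanti : ∀ n, V (n + 1) ⊆ V n)
    (η : ℕ → G → ℝ) (hη : InnerAmenabilitySeq η) :
    ∃ ξ : ℕ → G → ℝ, InnerAmenabilitySeq ξ ∧ ∀ n g, α g ∉ V n → ξ n g = 0 :=
  innerAmenabilitySeq_supported_near_one_general α V hVopen hVmem η hη
end

section
/- Let G be a countable discrete group and let (η_n) and (ξ_n) be inner amenability sequences for G. Then there exists a strictly increasing sequence (m_n) of natural numbers such that the sequence (η_n ∗ ξ̌_{m_n}) is again an inner amenability sequence for G, where ξ̌(g) := ξ(g⁻¹) and the convolution is (η ∗ ξ)(g) := ∑_{h∈G} η(h) ξ(h⁻¹ g). (Group case of the convolution lemma for inner amenability sequences.) -/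
open Filter Topology

namespace IASAux
variable {ι : Type*}

lemma tsum_le_of_ofReal_le {f : ι → ℝ} (hf : ∀ i, 0 ≤ f i) {c : ℝ} (hc : 0 ≤ c)
    (h : ∑' i, ENNReal.ofReal (f i) ≤ ENNReal.ofReal c) : ∑' i, f i ≤ c := by
  have hne : ∑' i, ENNReal.ofReal (f i) ≠ ⊤ :=
    (lt_of_le_of_lt h ENNReal.ofReal_lt_top).ne
  calc ∑' i, f i = (∑' i, ENNReal.ofReal (f i)).toReal := by
        rw [ENNReal.tsum_toReal_eq (fun i => ENNReal.ofReal_ne_top)]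
        exact tsum_congr fun i => (ENNReal.toReal_ofReal (hf i)).symm
    _ ≤ (ENNReal.ofReal c).toReal := ENNReal.toReal_mono ENNReal.ofReal_ne_top h
    _ = c := ENNReal.toReal_ofReal hc

lemma hasSum_of_ofReal_eq_one {f : ι → ℝ} (hf : ∀ i, 0 ≤ f i)
    (h : ∑' i, ENNReal.ofReal (f i) = 1) : HasSum f 1 := by
  have hne : ∑' i, ENNReal.ofReal (f i) ≠ ⊤ := by rw [h]; exact ENNReal.one_ne_top
  have hs : Summable f :=
    (ENNReal.summable_toReal hne).congr fun i => ENNReal.toReal_ofReal (hf i)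
  have ht : ∑' i, f i = 1 := by
    calc ∑' i, f i = (∑' i, ENNReal.ofReal (f i)).toReal := by
          rw [ENNReal.tsum_toReal_eq (fun i => ENNReal.ofReal_ne_top)]
          exact tsum_congr fun i => (ENNReal.toReal_ofReal (hf i)).symm
      _ = 1 := by rw [h]; simp
  exact ht ▸ hs.hasSum

lemma tsum_ofReal_eq_one {f : ι → ℝ} (hf : ∀ i, 0 ≤ f i) (h1 : HasSum f 1) :
    ∑' i, ENNReal.ofReal (f i) = 1 := by
  rw [← ENNReal.ofReal_tsum_of_nonneg hf h1.summable, h1.tsum_eq, ENNReal.ofReal_one]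

variable {G : Type*} [Group G]

lemma tsum_inv_mul (f : G → ENNReal) (h : G) : ∑' g : G, f (g⁻¹ * h) = ∑' x : G, f x :=
  ((Equiv.inv G).trans (Equiv.mulRight h)).tsum_eq f

lemma tsum_conj (f : G → ENNReal) (a : G) : ∑' k : G, f (a * k * a⁻¹) = ∑' x : G, f x :=
  (MulAut.conj a).toEquiv.tsum_eq f

lemma summable_conj {f : G → ℝ} (hf : Summable f) (a : G) :
    Summable fun k => f (a * k * a⁻¹) :=
  ((MulAut.conj a).toEquiv.summable_iff).2 hf

variable {u v : G → ℝ}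

lemma le_one_of_hasSum_one (hu0 : ∀ g, 0 ≤ u g) (hu1 : HasSum u 1) (g : G) : u g ≤ 1 :=
  le_hasSum hu1 g fun j _ => hu0 j

lemma conv_summable_inner (hu0 : ∀ g, 0 ≤ u g) (hu1 : HasSum u 1)
    (hv0 : ∀ g, 0 ≤ v g) (hv1 : HasSum v 1) (w : G → G) :
    Summable fun h => u h * v (w h) :=
  Summable.of_nonneg_of_le (fun h => mul_nonneg (hu0 h) (hv0 _))
    (fun h => mul_le_of_le_one_right (hu0 h) (le_one_of_hasSum_one hv0 hv1 _))
    hu1.summable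

lemma conv_hasSum (hu0 : ∀ g, 0 ≤ u g) (hu1 : HasSum u 1)
    (hv0 : ∀ g, 0 ≤ v g) (hv1 : HasSum v 1) :
    HasSum (fun g : G => ∑' h : G, u h * v (g⁻¹ * h)) 1 := by
  apply hasSum_of_ofReal_eq_one
    (fun g => tsum_nonneg fun h => mul_nonneg (hu0 h) (hv0 _))
  calc ∑' g : G, ENNReal.ofReal (∑' h : G, u h * v (g⁻¹ * h))
      = ∑' (g : G) (h : G), ENNReal.ofReal (u h) * ENNReal.ofReal (v (g⁻¹ * h)) := by
        refine tsum_congr fun g => ?_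
        rw [ENNReal.ofReal_tsum_of_nonneg (fun h => mul_nonneg (hu0 h) (hv0 _))
          (conv_summable_inner hu0 hu1 hv0 hv1 _)]
        exact tsum_congr fun h => ENNReal.ofReal_mul (hu0 h)
    _ = ∑' (h : G) (g : G), ENNReal.ofReal (u h) * ENNReal.ofReal (v (g⁻¹ * h)) :=
        ENNReal.tsum_comm
    _ = ∑' h : G, ENNReal.ofReal (u h) * ∑' g : G, ENNReal.ofReal (v (g⁻¹ * h)) :=
        tsum_congr fun h => ENNReal.tsum_mul_left
    _ = ∑' h : G, ENNReal.ofReal (u h) := by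
        refine tsum_congr fun h => ?_
        rw [tsum_inv_mul (fun x => ENNReal.ofReal (v x)) h, tsum_ofReal_eq_one hv0 hv1,
          mul_one]
    _ = 1 := tsum_ofReal_eq_one hu0 hu1

end IASAux

namespace IASAux
variable {G : Type*} [Group G] {u v : G → ℝ}

lemma conv_conj_bound (hu0 : ∀ g, 0 ≤ u g) (hu1 : HasSum u 1)
    (hv0 : ∀ g, 0 ≤ v g) (hv1 : HasSum v 1) (a : G) :
    ∑' g : G, |(∑' h : G, u h * v ((a * g * a⁻¹)⁻¹ * h)) - ∑' h : G, u h * v (g⁻¹ * h)| ≤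
      (∑' k : G, |u (a * k * a⁻¹) - u k|) + ∑' k : G, |v (a * k * a⁻¹) - v k| := by
  have su := hu1.summable
  have sv := hv1.summable
  have ule := le_one_of_hasSum_one hu0 hu1
  have vle := le_one_of_hasSum_one hv0 hv1
  have sua := summable_conj su a
  have sva := summable_conj sv a
  have sdu : Summable fun k => |u (a * k * a⁻¹) - u k| := (sua.sub su).abs
  have sdv : Summable fun k => |v (a * k * a⁻¹) - v k| := (sva.sub sv).abs
  have hDu0 : (0:ℝ) ≤ ∑' k : G, |u (a * k * a⁻¹) - u k| := tsum_nonneg fun k => abs_nonneg _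
  have hDv0 : (0:ℝ) ≤ ∑' k : G, |v (a * k * a⁻¹) - v k| := tsum_nonneg fun k => abs_nonneg _
  have sAint : ∀ g : G,
      Summable fun k => u (a * k * a⁻¹) * |v (a * (g⁻¹ * k) * a⁻¹) - v (g⁻¹ * k)| := by
    intro g
    refine (sua.mul_left 2).of_nonneg_of_le
      (fun k => mul_nonneg (hu0 _) (abs_nonneg _)) (fun k => ?_)
    have h2 : |v (a * (g⁻¹ * k) * a⁻¹) - v (g⁻¹ * k)| ≤ 2 := by
      rw [abs_sub_le_iff]
      constructor <;> nlinarith [hv0 (a * (g⁻¹ * k) * a⁻¹), hv0 (g⁻¹ * k),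
        vle (a * (g⁻¹ * k) * a⁻¹), vle (g⁻¹ * k)]
    calc u (a * k * a⁻¹) * |v (a * (g⁻¹ * k) * a⁻¹) - v (g⁻¹ * k)|
        ≤ u (a * k * a⁻¹) * 2 := mul_le_mul_of_nonneg_left h2 (hu0 _)
      _ = 2 * u (a * k * a⁻¹) := mul_comm _ _
  have sBint : ∀ g : G, Summable fun k => |u (a * k * a⁻¹) - u k| * v (g⁻¹ * k) :=
    fun g => sdu.of_nonneg_of_le (fun k => mul_nonneg (abs_nonneg _) (hv0 _))
      (fun k => mul_le_of_le_one_right (abs_nonneg _) (vle _))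
  have s1 : ∀ g : G, Summable fun k => u (a * k * a⁻¹) * v (a * (g⁻¹ * k) * a⁻¹) :=
    fun g => sua.of_nonneg_of_le (fun k => mul_nonneg (hu0 _) (hv0 _))
      (fun k => mul_le_of_le_one_right (hu0 _) (vle _))
  have s2 : ∀ g : G, Summable fun k => u k * v (g⁻¹ * k) :=
    fun g => conv_summable_inner hu0 hu1 hv0 hv1 _
  have hA0 : ∀ g : G,
      (0:ℝ) ≤ ∑' k : G, u (a * k * a⁻¹) * |v (a * (g⁻¹ * k) * a⁻¹) - v (g⁻¹ * k)| :=
    fun g => tsum_nonneg fun k => mul_nonneg (hu0 _) (abs_nonneg _)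
  have hB0 : ∀ g : G, (0:ℝ) ≤ ∑' k : G, |u (a * k * a⁻¹) - u k| * v (g⁻¹ * k) :=
    fun g => tsum_nonneg fun k => mul_nonneg (abs_nonneg _) (hv0 _)
  have hpt : ∀ g : G,
      |(∑' h : G, u h * v ((a * g * a⁻¹)⁻¹ * h)) - ∑' h : G, u h * v (g⁻¹ * h)| ≤
        (∑' k : G, u (a * k * a⁻¹) * |v (a * (g⁻¹ * k) * a⁻¹) - v (g⁻¹ * k)|) +
          ∑' k : G, |u (a * k * a⁻¹) - u k| * v (g⁻¹ * k) := by
    intro g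
    have hre : (∑' h : G, u h * v ((a * g * a⁻¹)⁻¹ * h))
        = ∑' k : G, u (a * k * a⁻¹) * v (a * (g⁻¹ * k) * a⁻¹) := by
      refine (((MulAut.conj a).toEquiv.tsum_eq
        (fun h => u h * v ((a * g * a⁻¹)⁻¹ * h))).symm).trans ?_
      refine tsum_congr fun k => ?_
      show u (a * k * a⁻¹) * v ((a * g * a⁻¹)⁻¹ * (a * k * a⁻¹)) = _
      rw [show (a * g * a⁻¹)⁻¹ * (a * k * a⁻¹) = a * (g⁻¹ * k) * a⁻¹ by group]
    rw [hre, ← Summable.tsum_sub (s1 g) (s2 g)]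
    have habs : |∑' k : G, (u (a * k * a⁻¹) * v (a * (g⁻¹ * k) * a⁻¹) - u k * v (g⁻¹ * k))|
        ≤ ∑' k : G, |u (a * k * a⁻¹) * v (a * (g⁻¹ * k) * a⁻¹) - u k * v (g⁻¹ * k)| := by
      have := norm_tsum_le_tsum_norm
        (f := fun k : G => u (a * k * a⁻¹) * v (a * (g⁻¹ * k) * a⁻¹) - u k * v (g⁻¹ * k))
        (by simpa [Real.norm_eq_abs] using ((s1 g).sub (s2 g)).abs)
      simpa [Real.norm_eq_abs] using this
    refine habs.trans ?_
    have hterm : ∀ k : G,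
        |u (a * k * a⁻¹) * v (a * (g⁻¹ * k) * a⁻¹) - u k * v (g⁻¹ * k)| ≤
          u (a * k * a⁻¹) * |v (a * (g⁻¹ * k) * a⁻¹) - v (g⁻¹ * k)| +
            |u (a * k * a⁻¹) - u k| * v (g⁻¹ * k) := by
      intro k
      have hsplit : u (a * k * a⁻¹) * v (a * (g⁻¹ * k) * a⁻¹) - u k * v (g⁻¹ * k)
          = u (a * k * a⁻¹) * (v (a * (g⁻¹ * k) * a⁻¹) - v (g⁻¹ * k)) +
            (u (a * k * a⁻¹) - u k) * v (g⁻¹ * k) := by ring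
      rw [hsplit]
      refine (abs_add_le _ _).trans ?_
      rw [abs_mul, abs_mul, abs_of_nonneg (hu0 _), abs_of_nonneg (hv0 _)]
    calc ∑' k : G, |u (a * k * a⁻¹) * v (a * (g⁻¹ * k) * a⁻¹) - u k * v (g⁻¹ * k)|
        ≤ ∑' k : G, (u (a * k * a⁻¹) * |v (a * (g⁻¹ * k) * a⁻¹) - v (g⁻¹ * k)| +
            |u (a * k * a⁻¹) - u k| * v (g⁻¹ * k)) :=
          Summable.tsum_le_tsum hterm (((s1 g).sub (s2 g)).abs) ((sAint g).add (sBint g))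
      _ = _ := Summable.tsum_add (sAint g) (sBint g)
  refine tsum_le_of_ofReal_le (fun g => abs_nonneg _) (by linarith) ?_
  have SA : ∑' g : G,
      ENNReal.ofReal (∑' k : G, u (a * k * a⁻¹) * |v (a * (g⁻¹ * k) * a⁻¹) - v (g⁻¹ * k)|)
      = ENNReal.ofReal (∑' k : G, |v (a * k * a⁻¹) - v k|) := by
    calc ∑' g : G, ENNReal.ofReal
          (∑' k : G, u (a * k * a⁻¹) * |v (a * (g⁻¹ * k) * a⁻¹) - v (g⁻¹ * k)|)
        = ∑' (g : G) (k : G), ENNReal.ofReal (u (a * k * a⁻¹)) *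
            ENNReal.ofReal |v (a * (g⁻¹ * k) * a⁻¹) - v (g⁻¹ * k)| := by
          refine tsum_congr fun g => ?_
          rw [ENNReal.ofReal_tsum_of_nonneg
            (fun k => mul_nonneg (hu0 _) (abs_nonneg _)) (sAint g)]
          exact tsum_congr fun k => ENNReal.ofReal_mul (hu0 _)
      _ = ∑' (k : G) (g : G), ENNReal.ofReal (u (a * k * a⁻¹)) *
            ENNReal.ofReal |v (a * (g⁻¹ * k) * a⁻¹) - v (g⁻¹ * k)| := ENNReal.tsum_comm
      _ = ∑' k : G, ENNReal.ofReal (u (a * k * a⁻¹)) *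
            ∑' g : G, ENNReal.ofReal |v (a * (g⁻¹ * k) * a⁻¹) - v (g⁻¹ * k)| :=
          tsum_congr fun k => ENNReal.tsum_mul_left
      _ = ∑' k : G, ENNReal.ofReal (u (a * k * a⁻¹)) *
            ENNReal.ofReal (∑' x : G, |v (a * x * a⁻¹) - v x|) := by
          refine tsum_congr fun k => ?_
          congr 1
          rw [tsum_inv_mul (fun x => ENNReal.ofReal |v (a * x * a⁻¹) - v x|) k,
            ← ENNReal.ofReal_tsum_of_nonneg (fun x => abs_nonneg _) sdv]
      _ = ENNReal.ofReal (∑' k : G, |v (a * k * a⁻¹) - v k|) := by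
          rw [ENNReal.tsum_mul_right, tsum_conj (fun x => ENNReal.ofReal (u x)) a,
            tsum_ofReal_eq_one hu0 hu1, one_mul]
  have SB : ∑' g : G,
      ENNReal.ofReal (∑' k : G, |u (a * k * a⁻¹) - u k| * v (g⁻¹ * k))
      = ENNReal.ofReal (∑' k : G, |u (a * k * a⁻¹) - u k|) := by
    calc ∑' g : G, ENNReal.ofReal (∑' k : G, |u (a * k * a⁻¹) - u k| * v (g⁻¹ * k))
        = ∑' (g : G) (k : G), ENNReal.ofReal |u (a * k * a⁻¹) - u k| *
            ENNReal.ofReal (v (g⁻¹ * k)) := by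
          refine tsum_congr fun g => ?_
          rw [ENNReal.ofReal_tsum_of_nonneg
            (fun k => mul_nonneg (abs_nonneg _) (hv0 _)) (sBint g)]
          exact tsum_congr fun k => ENNReal.ofReal_mul (abs_nonneg _)
      _ = ∑' (k : G) (g : G), ENNReal.ofReal |u (a * k * a⁻¹) - u k| *
            ENNReal.ofReal (v (g⁻¹ * k)) := ENNReal.tsum_comm
      _ = ∑' k : G, ENNReal.ofReal |u (a * k * a⁻¹) - u k| *
            ∑' g : G, ENNReal.ofReal (v (g⁻¹ * k)) :=
          tsum_congr fun k => ENNReal.tsum_mul_left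
      _ = ∑' k : G, ENNReal.ofReal |u (a * k * a⁻¹) - u k| := by
          refine tsum_congr fun k => ?_
          rw [tsum_inv_mul (fun x => ENNReal.ofReal (v x)) k,
            tsum_ofReal_eq_one hv0 hv1, mul_one]
      _ = ENNReal.ofReal (∑' k : G, |u (a * k * a⁻¹) - u k|) :=
          (ENNReal.ofReal_tsum_of_nonneg (fun x => abs_nonneg _) sdu).symm
  calc ∑' g : G, ENNReal.ofReal
        |(∑' h : G, u h * v ((a * g * a⁻¹)⁻¹ * h)) - ∑' h : G, u h * v (g⁻¹ * h)|
      ≤ ∑' g : G, ENNReal.ofReal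
          ((∑' k : G, u (a * k * a⁻¹) * |v (a * (g⁻¹ * k) * a⁻¹) - v (g⁻¹ * k)|) +
            ∑' k : G, |u (a * k * a⁻¹) - u k| * v (g⁻¹ * k)) :=
        ENNReal.tsum_le_tsum fun g => ENNReal.ofReal_le_ofReal (hpt g)
    _ = ∑' g : G,
          (ENNReal.ofReal (∑' k : G, u (a * k * a⁻¹) * |v (a * (g⁻¹ * k) * a⁻¹) - v (g⁻¹ * k)|) +
            ENNReal.ofReal (∑' k : G, |u (a * k * a⁻¹) - u k| * v (g⁻¹ * k))) :=
        tsum_congr fun g => ENNReal.ofReal_add (hA0 g) (hB0 g)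
    _ = (∑' g : G,
          ENNReal.ofReal (∑' k : G, u (a * k * a⁻¹) * |v (a * (g⁻¹ * k) * a⁻¹) - v (g⁻¹ * k)|)) +
          ∑' g : G, ENNReal.ofReal (∑' k : G, |u (a * k * a⁻¹) - u k| * v (g⁻¹ * k)) :=
        ENNReal.tsum_add
    _ = ENNReal.ofReal (∑' k : G, |v (a * k * a⁻¹) - v k|) +
          ENNReal.ofReal (∑' k : G, |u (a * k * a⁻¹) - u k|) := by rw [SA, SB]
    _ = ENNReal.ofReal ((∑' k : G, |u (a * k * a⁻¹) - u k|) +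
          ∑' k : G, |v (a * k * a⁻¹) - v k|) := by
        rw [← ENNReal.ofReal_add hDv0 hDu0, add_comm]

end IASAux


/-- The convolution lemma for inner amenability sequences of a countable discrete group:
if `(η n)` and `(ξ n)` are inner amenability sequences for `G`, then there is a strictly
increasing sequence `(m n)` of natural numbers such that the sequence of convolutions
`η n ∗ (ξ (m n))ᵛ`, where `ξᵛ (g) = ξ (g⁻¹)` and `(η ∗ ξ) (g) = ∑ h, η h * ξ (h⁻¹ * g)`,
is again an inner amenability sequence for `G`. -/
theorem innerAmenabilitySeq_convolution
    {G : Type*} [Group G] [Countable G]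
    (η ξ : ℕ → G → ℝ) (hη : InnerAmenabilitySeq η) (hξ : InnerAmenabilitySeq ξ) :
    ∃ m : ℕ → ℕ, StrictMono m ∧
      InnerAmenabilitySeq (fun n g => ∑' h : G, η n h * ξ (m n) ((h⁻¹ * g)⁻¹)) := by
  obtain ⟨hη0, hη1, hη2, hη3⟩ := hη
  obtain ⟨hξ0, hξ1, hξ2, hξ3⟩ := hξ
  -- cleanup of the convolution expression
  have hconv : ∀ (p q : ℕ) (g : G),
      (∑' h : G, η p h * ξ q ((h⁻¹ * g)⁻¹)) = ∑' h : G, η p h * ξ q (g⁻¹ * h) :=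
    fun p q g => tsum_congr fun h => by rw [mul_inv_rev, inv_inv]
  -- pointwise convergence in the second index
  have key4 : ∀ (n : ℕ) (a : G),
      Tendsto (fun q => ∑' h : G, η n h * ξ q (a⁻¹ * h)) atTop (𝓝 0) := by
    intro n a
    have h0 : Tendsto (fun q => ∑' h : G, η n h * ξ q (a⁻¹ * h)) atTop
        (𝓝 (∑' _ : G, (0:ℝ))) := by
      refine tendsto_tsum_of_dominated_convergence (hη1 n).summable (fun h => ?_) ?_
      · simpa using ((hξ3 (a⁻¹ * h)).const_mul (η n h))
      · filter_upwards with q h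
        rw [Real.norm_eq_abs, abs_of_nonneg (mul_nonneg (hη0 n h) (hξ0 q _))]
        exact mul_le_of_le_one_right (hη0 n h)
          (IASAux.le_one_of_hasSum_one (hξ0 q) (hξ1 q) _)
    simpa using h0
  -- choose the subsequence
  obtain ⟨e, he⟩ := exists_surjective_nat G
  have hM : ∀ n : ℕ, ∃ M : ℕ, ∀ q ≥ M, ∀ k ≤ n,
      (∑' h : G, η n h * ξ q ((e k)⁻¹ * h)) < 1 / (n + 1) := by
    intro n
    have hev : ∀ᶠ q in atTop, ∀ k ∈ Finset.range (n + 1),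
        (∑' h : G, η n h * ξ q ((e k)⁻¹ * h)) < 1 / (n + 1) := by
      refine (Finset.range (n + 1)).eventually_all.2 fun k _ => ?_
      exact (key4 n (e k)).eventually_lt_const (by positivity)
    obtain ⟨M, hM⟩ := eventually_atTop.1 hev
    exact ⟨M, fun q hq k hk => hM q hq k (Finset.mem_range.2 (Nat.lt_succ_of_le hk))⟩
  choose M hMspec using hM
  obtain ⟨m, hmono, hge⟩ : ∃ m : ℕ → ℕ, StrictMono m ∧ ∀ n, M n ≤ m n := by
    refine ⟨fun n => Nat.rec (M 0) (fun k ih => max (ih + 1) (M (k + 1))) n, ?_, ?_⟩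
    · exact strictMono_nat_of_lt_succ fun n =>
        lt_of_lt_of_le (Nat.lt_succ_self _) (le_max_left _ _)
    · intro n
      cases n with
      | zero => exact le_refl _
      | succ k => exact le_max_right _ _
  refine ⟨m, hmono, ?_, ?_, ?_, ?_⟩
  · exact fun n g => tsum_nonneg fun h => mul_nonneg (hη0 n h) (hξ0 _ _)
  · intro n
    have hs := IASAux.conv_hasSum (hη0 n) (hη1 n) (hξ0 (m n)) (hξ1 (m n))
    have heq : (fun g : G => ∑' h : G, η n h * ξ (m n) ((h⁻¹ * g)⁻¹)) =
        fun g : G => ∑' h : G, η n h * ξ (m n) (g⁻¹ * h) := funext (hconv n (m n))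
    show HasSum (fun g : G => ∑' h : G, η n h * ξ (m n) ((h⁻¹ * g)⁻¹)) 1
    rw [heq]
    exact hs
  · intro a
    have hb : ∀ n : ℕ,
        (∑' g : G, |(∑' h : G, η n h * ξ (m n) (((a * g * a⁻¹)⁻¹ * h))) -
          ∑' h : G, η n h * ξ (m n) (g⁻¹ * h)|) ≤
        (∑' k : G, |η n (a * k * a⁻¹) - η n k|) +
          ∑' k : G, |ξ (m n) (a * k * a⁻¹) - ξ (m n) k| :=
      fun n => IASAux.conv_conj_bound (hη0 n) (hη1 n) (hξ0 (m n)) (hξ1 (m n)) a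
    have hlim : Tendsto (fun n => (∑' k : G, |η n (a * k * a⁻¹) - η n k|) +
        ∑' k : G, |ξ (m n) (a * k * a⁻¹) - ξ (m n) k|) atTop (𝓝 0) := by
      have h1 := hη2 a
      have h2 := (hξ2 a).comp hmono.tendsto_atTop
      simpa using h1.add h2
    refine squeeze_zero (fun n => tsum_nonneg fun g => abs_nonneg _) (fun n => ?_) hlim
    calc (∑' g : G, |(∑' h : G, η n h * ξ (m n) ((h⁻¹ * (a * g * a⁻¹))⁻¹)) -
            ∑' h : G, η n h * ξ (m n) ((h⁻¹ * g)⁻¹)|)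
        = ∑' g : G, |(∑' h : G, η n h * ξ (m n) ((a * g * a⁻¹)⁻¹ * h)) -
            ∑' h : G, η n h * ξ (m n) (g⁻¹ * h)| := by
          refine tsum_congr fun g => ?_
          rw [hconv n (m n) (a * g * a⁻¹), hconv n (m n) g]
      _ ≤ _ := hb n
  · intro a
    obtain ⟨k, hk⟩ := he a
    have hub : ∀ n ≥ k, (∑' h : G, η n h * ξ (m n) ((h⁻¹ * a)⁻¹)) ≤ 1 / (n + 1) := by
      intro n hn
      rw [hconv n (m n) a, ← hk]
      exact le_of_lt (hMspec n (m n) (hge n) k hn)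
    have hlb : ∀ n, (0:ℝ) ≤ ∑' h : G, η n h * ξ (m n) ((h⁻¹ * a)⁻¹) :=
      fun n => tsum_nonneg fun h => mul_nonneg (hη0 n h) (hξ0 _ _)
    refine squeeze_zero' (Eventually.of_forall hlb)
      (eventually_atTop.2 ⟨k, hub⟩) ?_
    exact tendsto_one_div_add_atTop_nhds_zero_nat
end

section
/- Let (X, μ) be a standard Borel probability space and let (C_n) be a sequence of measurable subsets of X whose measures are uniformly positive, i.e., there is c > 0 with μ(C_n) > c for all n. Then there exist a strictly increasing map φ : ℕ → ℕ and a real number r > 0 such that μ(C_{φ(i)} ∩ C_{φ(j)}) > r for all i and j. -/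
open MeasureTheory

section RamseyAux

variable (R : ℕ → ℕ → Prop)

structure RamseyState where
  a : ℕ
  tag : Bool
  S : Set ℕ
  hS : S.Infinite
  hmem : ∀ m ∈ S, a < m
  hR : ∀ m ∈ S, (R a m ↔ tag = true)

lemma ramsey_exists_step (S : Set ℕ) (hS : S.Infinite) :
    ∃ st : RamseyState R, st.S ⊆ S ∧ st.a ∈ S := by
  classical
  obtain ⟨b, hb⟩ := hS.nonempty
  have hS' : (S \ Set.Iic b).Infinite := hS.diff (Set.finite_Iic b)
  by_cases hT : {m ∈ S \ Set.Iic b | R b m}.Infinite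
  · refine ⟨⟨b, true, _, hT, ?_, ?_⟩, ?_, hb⟩
    · rintro m ⟨⟨-, hm2⟩, -⟩
      simpa using hm2
    · rintro m ⟨-, hm⟩
      simp [hm]
    · rintro m ⟨⟨hm, -⟩, -⟩
      exact hm
  · have hF : {m ∈ S \ Set.Iic b | ¬ R b m}.Infinite := by
      have h1 : ((S \ Set.Iic b) \ {m ∈ S \ Set.Iic b | R b m}).Infinite :=
        hS'.diff (Set.not_infinite.mp hT)
      refine h1.mono ?_
      rintro m ⟨hm1, hm2⟩
      exact ⟨hm1, fun h => hm2 ⟨hm1, h⟩⟩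
    refine ⟨⟨b, false, _, hF, ?_, ?_⟩, ?_, hb⟩
    · rintro m ⟨⟨-, hm2⟩, -⟩
      simpa using hm2
    · rintro m ⟨-, hm⟩
      simp [hm]
    · rintro m ⟨⟨hm, -⟩, -⟩
      exact hm

noncomputable def ramseyStep (st : RamseyState R) : RamseyState R :=
  (ramsey_exists_step R st.S st.hS).choose

lemma ramseyStep_sub (st : RamseyState R) : (ramseyStep R st).S ⊆ st.S :=
  (ramsey_exists_step R st.S st.hS).choose_spec.1

lemma ramseyStep_mem (st : RamseyState R) : (ramseyStep R st).a ∈ st.S :=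
  (ramsey_exists_step R st.S st.hS).choose_spec.2

noncomputable def ramseyChain : ℕ → RamseyState R
  | 0 => (ramsey_exists_step R Set.univ Set.infinite_univ).choose
  | n + 1 => ramseyStep R (ramseyChain n)

lemma ramseyChain_S_antitone : ∀ {i j : ℕ}, i ≤ j →
    (ramseyChain R j).S ⊆ (ramseyChain R i).S := by
  intro i j hij
  induction j with
  | zero => simpa [Nat.le_zero.mp hij] using subset_rfl
  | succ k ih =>
    rcases Nat.lt_or_ge i (k + 1) with h | h
    · exact (ramseyStep_sub R (ramseyChain R k)).trans (ih (Nat.lt_succ_iff.mp h))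
    · have : i = k + 1 := le_antisymm hij h
      simp [this, ramseyChain]

lemma ramseyChain_a_mem {n m : ℕ} (h : n < m) :
    (ramseyChain R m).a ∈ (ramseyChain R n).S := by
  obtain ⟨k, rfl⟩ : ∃ k, m = k + 1 := ⟨m - 1, by omega⟩
  have h1 : (ramseyChain R (k + 1)).a ∈ (ramseyChain R k).S :=
    ramseyStep_mem R (ramseyChain R k)
  exact ramseyChain_S_antitone R (Nat.lt_succ_iff.mp h) h1

lemma ramseyChain_strictMono : StrictMono (fun n => (ramseyChain R n).a) := by
  intro n m h
  exact (ramseyChain R n).hmem _ (ramseyChain_a_mem R h)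

lemma ramseyChain_R {n m : ℕ} (h : n < m) :
    (R (ramseyChain R n).a (ramseyChain R m).a ↔ (ramseyChain R n).tag = true) :=
  (ramseyChain R n).hR _ (ramseyChain_a_mem R h)

/-- Infinite Ramsey theorem for pairs, two colors. -/
lemma ramsey_pairs :
    (∃ φ : ℕ → ℕ, StrictMono φ ∧ ∀ i j, i < j → R (φ i) (φ j)) ∨
    (∃ φ : ℕ → ℕ, StrictMono φ ∧ ∀ i j, i < j → ¬ R (φ i) (φ j)) := by
  classical
  by_cases h : {n | (ramseyChain R n).tag = true}.Infinite
  · left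
    refine ⟨fun n => (ramseyChain R (Nat.nth (fun n => (ramseyChain R n).tag = true) n)).a,
      ?_, ?_⟩
    · exact (ramseyChain_strictMono R).comp (Nat.nth_strictMono h)
    · intro i j hij
      have hlt := (Nat.nth_strictMono h) hij
      have := Nat.nth_mem_of_infinite h i
      exact (ramseyChain_R R hlt).mpr this
  · right
    have h' : {n | (ramseyChain R n).tag = false}.Infinite := by
      have hcompl : {n | (ramseyChain R n).tag = false} =
          {n | (ramseyChain R n).tag = true}ᶜ := by
        ext n; cases hb : (ramseyChain R n).tag <;> simp [hb]
      rw [hcompl]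
      exact Set.Finite.infinite_compl (Set.not_infinite.mp h)
    refine ⟨fun n => (ramseyChain R (Nat.nth (fun n => (ramseyChain R n).tag = false) n)).a,
      ?_, ?_⟩
    · exact (ramseyChain_strictMono R).comp (Nat.nth_strictMono h')
    · intro i j hij hR
      have hlt := (Nat.nth_strictMono h') hij
      have hmem := Nat.nth_mem_of_infinite h' i
      have := (ramseyChain_R R hlt).mp hR
      simp [hmem] at this

end RamseyAux

lemma bonferroni {X : Type*} [MeasurableSpace X] (μ : Measure X) [IsProbabilityMeasure μ]
    (D : ℕ → Set X) (hD : ∀ n, MeasurableSet (D n)) (N : ℕ) :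
    (∑ i ∈ Finset.range N, (μ (D i)).toReal) -
      (∑ j ∈ Finset.range N, ∑ i ∈ Finset.range j, (μ (D i ∩ D j)).toReal)
      ≤ (μ (⋃ i ∈ Finset.range N, D i)).toReal := by
  induction N with
  | zero => simp
  | succ k ih =>
    have hU : (⋃ i ∈ Finset.range (k+1), D i) =
        (⋃ i ∈ Finset.range k, D i) ∪ D k := by
      rw [Finset.range_add_one, Finset.set_biUnion_insert, Set.union_comm]
    set U := ⋃ i ∈ Finset.range k, D i with hUdef
    have key : μ (U ∪ D k) + μ (U ∩ D k) = μ U + μ (D k) :=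
      measure_union_add_inter U (hD k)
    have h1 : (μ (U ∪ D k)).toReal + (μ (U ∩ D k)).toReal
        = (μ U).toReal + (μ (D k)).toReal := by
      rw [← ENNReal.toReal_add (measure_ne_top μ _) (measure_ne_top μ _),
        ← ENNReal.toReal_add (measure_ne_top μ _) (measure_ne_top μ _), key]
    have h2 : (μ (U ∩ D k)).toReal ≤ ∑ i ∈ Finset.range k, (μ (D i ∩ D k)).toReal := by
      have hsub : U ∩ D k = ⋃ i ∈ Finset.range k, (D i ∩ D k) := by
        rw [hUdef, Set.iUnion₂_inter]
      have hb : μ (U ∩ D k) ≤ ∑ i ∈ Finset.range k, μ (D i ∩ D k) := by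
        rw [hsub]; exact measure_biUnion_finset_le _ _
      calc (μ (U ∩ D k)).toReal
          ≤ (∑ i ∈ Finset.range k, μ (D i ∩ D k)).toReal :=
            ENNReal.toReal_mono (ENNReal.sum_ne_top.mpr fun i _ => measure_ne_top μ _) hb
        _ = ∑ i ∈ Finset.range k, (μ (D i ∩ D k)).toReal :=
            ENNReal.toReal_sum fun i _ => measure_ne_top μ _
    rw [hU]
    rw [Finset.sum_range_succ, Finset.sum_range_succ (f := fun j => ∑ i ∈ Finset.range j, (μ (D i ∩ D j)).toReal)]
    linarith

lemma no_small_subseq {X : Type*} [MeasurableSpace X] (μ : Measure X) [IsProbabilityMeasure μ]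
    (D : ℕ → Set X) (hD : ∀ n, MeasurableSet (D n)) (c : ℝ) (hc : 0 < c) (hc1 : c < 1)
    (hpos : ∀ n, c < (μ (D n)).toReal)
    (hsmall : ∀ i j, i < j → (μ (D i ∩ D j)).toReal ≤ c ^ 2 / 4) : False := by
  set N : ℕ := ⌈3 / (2 * c)⌉₊ with hN
  have hNpos : 0 < N := Nat.ceil_pos.mpr (by positivity)
  have hN1 : 3 / (2 * c) ≤ (N : ℝ) := Nat.le_ceil _
  have hN2 : (N : ℝ) < 3 / (2 * c) + 1 := Nat.ceil_lt_add_one (by positivity)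
  have ht1 : (3 : ℝ) / 2 ≤ N * c := by
    have h := (div_le_iff₀ (show (0:ℝ) < 2 * c by positivity)).mp hN1
    nlinarith
  have ht2 : (N : ℝ) * c < 5 / 2 := by
    have : (N : ℝ) * c < (3 / (2 * c) + 1) * c := by nlinarith
    have h3 : (3 / (2 * c) + 1) * c = 3 / 2 + c := by field_simp
    nlinarith
  -- lower bound on sum of measures
  have hsum : (N : ℝ) * c < ∑ i ∈ Finset.range N, (μ (D i)).toReal := by
    have := Finset.sum_lt_sum_of_nonempty (s := Finset.range N)
      (Finset.nonempty_range_iff.mpr hNpos.ne') (f := fun _ => c) (g := fun i => (μ (D i)).toReal)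
      (fun i _ => hpos i)
    simpa [mul_comm] using this
  -- upper bound on pair sums
  have hpair : (∑ j ∈ Finset.range N, ∑ i ∈ Finset.range j, (μ (D i ∩ D j)).toReal)
      ≤ (N : ℝ) ^ 2 * c ^ 2 / 8 := by
    have h1 : ∀ j ∈ Finset.range N, ∑ i ∈ Finset.range j, (μ (D i ∩ D j)).toReal
        ≤ (j : ℝ) * (c ^ 2 / 4) := by
      intro j _
      calc ∑ i ∈ Finset.range j, (μ (D i ∩ D j)).toReal
          ≤ ∑ _i ∈ Finset.range j, c ^ 2 / 4 :=
            Finset.sum_le_sum fun i hi => hsmall i j (Finset.mem_range.mp hi)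
        _ = (j : ℝ) * (c ^ 2 / 4) := by simp [mul_comm]
    calc (∑ j ∈ Finset.range N, ∑ i ∈ Finset.range j, (μ (D i ∩ D j)).toReal)
        ≤ ∑ j ∈ Finset.range N, (j : ℝ) * (c ^ 2 / 4) := Finset.sum_le_sum h1
      _ = (∑ j ∈ Finset.range N, (j : ℝ)) * (c ^ 2 / 4) := by rw [← Finset.sum_mul]
      _ ≤ ((N : ℝ) ^ 2 / 2) * (c ^ 2 / 4) := by
          have h2 : (∑ j ∈ Finset.range N, (j : ℝ)) ≤ (N : ℝ) ^ 2 / 2 := by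
            have h := Finset.sum_range_id_mul_two N
            have h' : ((∑ i ∈ Finset.range N, i : ℕ) : ℝ) * 2 ≤ (N : ℝ) * (N : ℝ) := by
              rw_mod_cast [h]
              exact_mod_cast Nat.mul_le_mul_left N (Nat.sub_le N 1)
            push_cast at h'
            nlinarith
          have h0 : (0:ℝ) ≤ c ^ 2 / 4 := by positivity
          exact mul_le_mul_of_nonneg_right h2 h0
      _ = (N : ℝ) ^ 2 * c ^ 2 / 8 := by ring
  have hle1 : (μ (⋃ i ∈ Finset.range N, D i)).toReal ≤ 1 := by
    have := ENNReal.toReal_mono (measure_ne_top μ Set.univ)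
      (measure_mono (Set.subset_univ (⋃ i ∈ Finset.range N, D i)))
    simpa using this
  have hbon := bonferroni μ D hD N
  set t := (N : ℝ) * c with htdef
  have : t - t ^ 2 / 8 ≤ 1 := by nlinarith
  nlinarith

/-- If `(C n)` is a sequence of measurable subsets of a standard Borel probability space
`(X, μ)` with uniformly positive measure, then after passing to a subsequence the pairwise
intersections have uniformly positive measure: there are a strictly increasing `φ : ℕ → ℕ`
and `r > 0` with `μ (C (φ i) ∩ C (φ j)) > r` for all `i, j`. -/
theorem exists_subseq_uniform_pairwise_intersection
    {X : Type*} [MeasurableSpace X] [StandardBorelSpace X]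
    (μ : Measure X) [IsProbabilityMeasure μ]
    (C : ℕ → Set X) (hC : ∀ n, MeasurableSet (C n))
    (c : ℝ) (hc : 0 < c) (hpos : ∀ n, c < (μ (C n)).toReal) :
    ∃ (φ : ℕ → ℕ) (r : ℝ), StrictMono φ ∧ 0 < r ∧
      ∀ i j, r < (μ (C (φ i) ∩ C (φ j))).toReal := by
  have hc1 : c < 1 := by
    refine lt_of_lt_of_le (hpos 0) ?_
    have := ENNReal.toReal_mono (measure_ne_top μ Set.univ)
      (measure_mono (Set.subset_univ (C 0)))
    simpa using this
  have hr : c ^ 2 / 4 < c := by nlinarith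
  rcases ramsey_pairs (fun a b => c ^ 2 / 4 < (μ (C a ∩ C b)).toReal) with
    ⟨φ, hφ, hgood⟩ | ⟨φ, hφ, hbad⟩
  · refine ⟨φ, c ^ 2 / 4, hφ, by positivity, ?_⟩
    intro i j
    rcases lt_trichotomy i j with h | h | h
    · exact hgood i j h
    · subst h
      rw [Set.inter_self]
      exact hr.trans (hpos (φ i))
    · rw [Set.inter_comm]
      exact hgood j i h
  · exact (no_small_subseq μ (fun n => C (φ n)) (fun n => hC (φ n))
      c hc hc1 (fun n => hpos (φ n))
      (fun i j hij => le_of_not_gt (hbad i j hij))).elim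
end

section
/- Let G be a countable discrete group acting by measure-preserving transformations on a standard Borel probability space (X, μ), and assume the action is ergodic, i.e., every measurable A ⊆ X with μ(g·A △ A) = 0 for all g ∈ G satisfies μ(A) ∈ {0, 1}. Let (D_n) be a sequence of measurable subsets of X such that μ(g·D_n △ D_n) → 0 for every g ∈ G and such that there exists c > 0 with μ(D_n) ≥ c for all n. Then μ(⋃_n D_n) = 1. -/
open Filter Topology MeasureTheory Pointwise
open scoped symmDiff ENNReal

/-!
If `μ (⋃ n, D n) < 1`, the complement `F` of the union has positive measure, so by ergodicity
its translates `g • F` cover `X` up to a null set. Since `D n ∩ g • F ⊆ (g • D n) ∆ D n`, each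
translate meets `D n` in a set of vanishing measure. As finitely many translates cover all of `X`
but an arbitrarily small part, `μ (D n) → 0`, contradicting `μ (D n) ≥ c`.
-/

section Action

variable {G X : Type*} [Group G] [MulAction G X]

theorem Set.inter_smul_compl_subset_symmDiff {D U : Set X} (hDU : D ⊆ U) (g : G) :
    D ∩ g • Uᶜ ⊆ (g • D) ∆ D := by
  rintro x ⟨hxD, hxU⟩
  refine Or.inr ⟨hxD, fun hgx => ?_⟩
  rw [Set.mem_smul_set_iff_inv_smul_mem] at hxU hgx
  exact hxU (hDU hgx)

theorem Set.smul_iUnion_smul (h : G) (F : Set X) : h • ⋃ g : G, g • F = ⋃ g : G, g • F := by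
  simp_rw [Set.smul_set_iUnion, smul_smul]
  exact (Equiv.mulLeft h).surjective.iUnion_comp fun g => g • F

variable [MeasurableSpace X]

theorem MeasurableSet.smul_set_of_measurable {g : G} (hg : Measurable fun x : X => g⁻¹ • x)
    {S : Set X} (hS : MeasurableSet S) : MeasurableSet (g • S) :=
  Set.preimage_smul_inv g S ▸ hg hS

theorem measure_iUnion_smul_eq_one_of_ergodic [Countable G] {μ : Measure X}
    (hmeas : ∀ g : G, Measurable fun x : X => g • x)
    (herg : ∀ A : Set X, MeasurableSet A →
      (∀ g : G, μ ((g • A) ∆ A) = 0) → μ A = 0 ∨ μ A = 1)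
    {F : Set X} (hF : MeasurableSet F) (hF0 : μ F ≠ 0) :
    μ (⋃ g : G, g • F) = 1 := by
  have hinv : ∀ h : G, μ ((h • ⋃ g : G, g • F) ∆ ⋃ g : G, g • F) = 0 := fun h => by
    rw [Set.smul_iUnion_smul, symmDiff_self, Set.bot_eq_empty, measure_empty]
  refine (herg _ (.iUnion fun g => hF.smul_set_of_measurable (hmeas g⁻¹)) hinv).resolve_left
    fun h0 => hF0 (measure_mono_null (Set.subset_iUnion_of_subset 1 (one_smul G F).ge) h0)

end Action

theorem tendsto_measure_zero_of_tendsto_measure_inter_zero {X ι α : Type*} [MeasurableSpace X]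
    [Countable ι] {μ : Measure X} [IsFiniteMeasure μ] {s : ι → Set X}
    (hs : ∀ i, MeasurableSet (s i)) (hcover : μ (⋃ i, s i)ᶜ = 0) {l : Filter α}
    {D : α → Set X} (hD : ∀ i, Tendsto (fun n => μ (D n ∩ s i)) l (𝓝 0)) :
    Tendsto (fun n => μ (D n)) l (𝓝 0) := by
  rw [ENNReal.tendsto_nhds_zero]
  intro ε hε
  have hε2 : 0 < ε / 2 := ENNReal.half_pos hε.ne'
  have htail : Tendsto (fun t : Finset ι => μ (⋃ i ∈ t, s i)ᶜ) atTop (𝓝 0) := by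
    have := tendsto_measure_iInter_atTop (μ := μ) (s := fun t : Finset ι => (⋃ i ∈ t, s i)ᶜ)
      (fun t => (Finset.measurableSet_biUnion t fun i _ => hs i).compl.nullMeasurableSet)
      (fun t t' htt' => Set.compl_subset_compl.2 (Set.biUnion_subset_biUnion_left htt'))
      ⟨∅, measure_ne_top _ _⟩
    rwa [← Set.compl_iUnion, ← Set.iUnion_eq_iUnion_finset, hcover] at this
  obtain ⟨t, ht⟩ := (ENNReal.tendsto_nhds_zero.1 htail _ hε2).exists
  have hsum : ∀ᶠ n in l, ∑ i ∈ t, μ (D n ∩ s i) ≤ ε / 2 :=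
    ENNReal.tendsto_nhds_zero.1 (by simpa using tendsto_finsetSum t fun i _ => hD i) _ hε2
  filter_upwards [hsum] with n hn
  have hsplit : D n ⊆ (⋃ i ∈ t, s i)ᶜ ∪ ⋃ i ∈ t, D n ∩ s i := by
    rw [← Set.inter_iUnion₂]
    intro x hx
    by_cases hxt : x ∈ ⋃ i ∈ t, s i
    · exact Or.inr ⟨hx, hxt⟩
    · exact Or.inl hxt
  calc μ (D n) ≤ μ (⋃ i ∈ t, s i)ᶜ + ∑ i ∈ t, μ (D n ∩ s i) :=
        (measure_mono hsplit).trans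
          ((measure_union_le _ _).trans (add_le_add_right (measure_biUnion_finset_le _ _) _))
    _ ≤ ε / 2 + ε / 2 := add_le_add ht hn
    _ = ε := ENNReal.add_halves ε

theorem iUnion_asymptotically_invariant_full_general
    {G : Type*} [Group G] [Countable G]
    {X : Type*} [MeasurableSpace X]
    (μ : Measure X) [IsProbabilityMeasure μ] [MulAction G X]
    (hmp : ∀ g : G, MeasurePreserving (fun x : X => g • x) μ μ)
    (herg : ∀ A : Set X, MeasurableSet A →
      (∀ g : G, μ ((g • A) ∆ A) = 0) → μ A = 0 ∨ μ A = 1)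
    (D : ℕ → Set X) (hD : ∀ n, MeasurableSet (D n))
    (hai : ∀ g : G, Tendsto (fun n => (μ ((g • D n) ∆ D n)).toReal) atTop (𝓝 0))
    (c : ℝ) (hc : 0 < c) (hpos : ∀ n, ENNReal.ofReal c ≤ μ (D n)) :
    μ (⋃ n, D n) = 1 := by
  have hmeas : ∀ g : G, Measurable fun x : X => g • x := fun g => (hmp g).measurable
  have hU : MeasurableSet (⋃ n, D n) := .iUnion hD
  rw [← prob_compl_eq_zero_iff hU]
  by_contra hF
  have hcover : μ (⋃ g : G, g • (⋃ n, D n)ᶜ)ᶜ = 0 :=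
    (prob_compl_eq_zero_iff (.iUnion fun g => hU.compl.smul_set_of_measurable (hmeas g⁻¹))).2
      (measure_iUnion_smul_eq_one_of_ergodic hmeas herg hU.compl hF)
  have hvanish : ∀ g : G, Tendsto (fun n => μ (D n ∩ g • (⋃ n, D n)ᶜ)) atTop (𝓝 0) := fun g =>
    tendsto_of_tendsto_of_tendsto_of_le_of_le tendsto_const_nhds
      ((ENNReal.tendsto_toReal_zero_iff fun _ => measure_ne_top _ _).1 (hai g)) (fun _ => zero_le)
      fun n => measure_mono (Set.inter_smul_compl_subset_symmDiff (Set.subset_iUnion D n) g)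
  have hlim := tendsto_measure_zero_of_tendsto_measure_inter_zero
    (fun g => hU.compl.smul_set_of_measurable (hmeas g⁻¹)) hcover hvanish
  exact (ENNReal.ofReal_pos.2 hc).not_ge (ge_of_tendsto' hlim hpos)

/-- Let `G` be a countable group acting ergodically by measure-preserving transformations on
a standard Borel probability space `(X, μ)`.  If `(D n)` is an asymptotically invariant
sequence of measurable subsets whose measures are uniformly positive, then `⋃ n, D n` has
full measure. -/
theorem iUnion_asymptotically_invariant_full
    {G : Type*} [Group G] [Countable G]
    {X : Type*} [MeasurableSpace X] [StandardBorelSpace X]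
    (μ : Measure X) [IsProbabilityMeasure μ] [MulAction G X]
    (hmp : ∀ g : G, MeasurePreserving (fun x : X => g • x) μ μ)
    (herg : ∀ A : Set X, MeasurableSet A →
      (∀ g : G, μ ((g • A) ∆ A) = 0) → μ A = 0 ∨ μ A = 1)
    (D : ℕ → Set X) (hD : ∀ n, MeasurableSet (D n))
    (hai : ∀ g : G, Tendsto (fun n => (μ ((g • D n) ∆ D n)).toReal) atTop (𝓝 0))
    (c : ℝ) (hc : 0 < c) (hpos : ∀ n, ENNReal.ofReal c ≤ μ (D n)) :
    μ (⋃ n, D n) = 1 :=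
  iUnion_asymptotically_invariant_full_general μ hmp herg D hD hai c hc hpos
end

section
/- Let G be a countable discrete group with a measure-preserving action on a standard Borel probability space (X, μ), and assume the conjugation–Koopman representation has spectral gap, i.e., there exist a finite set S₀ ⊆ G and κ > 0 such that every ξ ∈ L²(G × X, ν) satisfying ∫_X ξ(h, x) dμ(x) = 0 for every h ∈ G obeys max_{g∈S₀} ‖π(g)ξ − ξ‖₂ ≥ κ‖ξ‖₂. Then for every ε > 0 there exist a finite subset S ⊆ G and δ > 0 such that whenever ξ : G × X → [0, ∞) is measurable with ‖ξ‖₁ = 1 and max_{g∈S} ‖ξ^g − ξ‖₁ < δ, one has ‖ξ − Pξ‖₁ < ε, where (Pξ)(h, x) := ∫_X ξ(h, t) dμ(t). -/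
/-!
Put `η = √ξ`, so that `‖η‖₂ = 1`. The Powers–Størmer inequality `(√a - √b)² ≤ |a - b|` gives
`‖π(g)η - η‖₂² ≤ ‖π(g)ξ - ξ‖₁ = ‖ξ^{g⁻¹} - ξ‖₁`. Since `π(g)` commutes with the fiber average `P`,
the spectral gap applied to the fiberwise mean-zero function `η - Pη` yields some `g ∈ S₀` with
`κ ‖η - Pη‖₂ ≤ 2 ‖π(g)η - η‖₂`, which is small when `ξ` is almost invariant under `S₀⁻¹`.
Finally `ξ - (Pη)² = (η - Pη)(η + Pη)` with `(Pη)²` constant on fibers, so by Cauchy–Schwarz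
`‖ξ - Pξ‖₁ ≤ 2 ‖ξ - (Pη)²‖₁ ≤ 4 ‖η - Pη‖₂`.
-/

open Filter Topology MeasureTheory
open scoped ENNReal

/-- The natural measure on `G × X`: the product of the counting measure on the countable
discrete group `G` with the probability measure `μ` on `X`. -/
noncomputable def nuGX (G : Type*) {X : Type*} [MeasurableSpace G] [MeasurableSpace X]
    (μ : Measure X) : Measure (G × X) :=
  (Measure.count : Measure G).prod μ

theorem sq_sqrt_sub_sqrt_le_abs_sub {a b : ℝ} (ha : 0 ≤ a) (hb : 0 ≤ b) :
    (√a - √b) ^ 2 ≤ |a - b| := by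
  have h : |√a - √b| ≤ √a + √b := (abs_sub _ _).trans <| by
    rw [abs_of_nonneg (Real.sqrt_nonneg a), abs_of_nonneg (Real.sqrt_nonneg b)]
  calc (√a - √b) ^ 2 = |√a - √b| * |√a - √b| := by rw [abs_mul_abs_self, sq]
    _ ≤ |√a - √b| * (√a + √b) := by gcongr
    _ = |a - b| := by
      rw [← abs_of_nonneg (add_nonneg (Real.sqrt_nonneg a) (Real.sqrt_nonneg b)), ← abs_mul]
      congr 1
      linear_combination Real.sq_sqrt ha - Real.sq_sqrt hb

theorem eLpNorm_sqrt_sub_sqrt_sq_le {α : Type*} [MeasurableSpace α] {m : Measure α}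
    {f g : α → ℝ} (hf : ∀ x, 0 ≤ f x) (hg : ∀ x, 0 ≤ g x) :
    eLpNorm (fun x => √(f x) - √(g x)) 2 m ^ 2 ≤ eLpNorm (f - g) 1 m := by
  have h := eLpNorm_norm_rpow (p := 1) (μ := m) (fun x => √(f x) - √(g x)) two_pos
  rw [one_mul, ENNReal.ofReal_ofNat, ENNReal.rpow_two] at h
  rw [← h]
  refine eLpNorm_mono fun x => ?_
  rw [Real.rpow_two, Real.norm_eq_abs, Real.norm_eq_abs, sq_abs, abs_of_nonneg (sq_nonneg _)]
  exact sq_sqrt_sub_sqrt_le_abs_sub (hf x) (hg x)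

theorem eLpNorm_sqrt_le_one {α : Type*} [MeasurableSpace α] {m : Measure α}
    {f : α → ℝ} (hf : ∀ x, 0 ≤ f x) (hf1 : eLpNorm f 1 m ≤ 1) :
    eLpNorm (fun x => √(f x)) 2 m ≤ 1 := by
  have h := eLpNorm_sqrt_sub_sqrt_sq_le (m := m) hf (g := 0) fun _ => le_rfl
  simp only [Pi.zero_apply, Real.sqrt_zero, sub_zero] at h
  exact (pow_le_one_iff two_ne_zero).mp (h.trans hf1)

theorem eLpNorm_mul_le_mul_eLpNorm_two {α : Type*} [MeasurableSpace α] {m : Measure α}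
    {f g : α → ℝ} (hf : AEStronglyMeasurable f m) (hg : AEStronglyMeasurable g m) :
    eLpNorm (f * g) 1 m ≤ eLpNorm f 2 m * eLpNorm g 2 m :=
  (eLpNorm_smul_le_mul_eLpNorm (p := 2) (q := 2) (r := 1) hg hf :)

section FiberAverage

variable {G X : Type*} [MeasurableSpace X] {μ : Measure X}

noncomputable def fiberAverage (μ : Measure X) (f : G × X → ℝ) : G × X → ℝ :=
  fun q => ∫ t, f (q.1, t) ∂μ

theorem fiberAverage_sub {f g : G × X → ℝ} (hf : ∀ h, Integrable (fun x => f (h, x)) μ)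
    (hg : ∀ h, Integrable (fun x => g (h, x)) μ) :
    fiberAverage μ (f - g) = fiberAverage μ f - fiberAverage μ g :=
  funext fun q => integral_sub (hf q.1) (hg q.1)

theorem integral_sub_fiberAverage [IsProbabilityMeasure μ] (f : G × X → ℝ) (h : G) :
    ∫ x, (f - fiberAverage μ f) (h, x) ∂μ = 0 := by
  by_cases hf : Integrable (fun x => f (h, x)) μ
  · simp [fiberAverage, integral_sub hf (integrable_const _)]
  · simp [fiberAverage, integral_undef hf]

variable [MeasurableSpace G] [MeasurableSingletonClass G] {p : ℝ≥0∞}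

theorem lintegral_nuGX [SFinite μ] {f : G × X → ℝ≥0∞} (hf : Measurable f) :
    ∫⁻ q, f q ∂nuGX G μ = ∑' h, ∫⁻ x, f (h, x) ∂μ := by
  rw [nuGX, lintegral_prod _ hf.aemeasurable, lintegral_count]

theorem eLpNorm_nuGX_rpow_eq_tsum [SFinite μ] (hp0 : p ≠ 0) (hp : p ≠ ∞) {f : G × X → ℝ}
    (hf : Measurable f) :
    eLpNorm f p (nuGX G μ) ^ p.toReal = ∑' h, eLpNorm (fun x => f (h, x)) p μ ^ p.toReal := by
  have hr : 0 < p.toReal := ENNReal.toReal_pos hp0 hp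
  simp only [eLpNorm_eq_eLpNorm' hp0 hp, ← lintegral_rpow_enorm_eq_rpow_eLpNorm' hr]
  exact lintegral_nuGX (hf.enorm.pow_const _)

theorem eLpNorm_fiber_le [SFinite μ] (hp0 : p ≠ 0) (hp : p ≠ ∞) {f : G × X → ℝ}
    (hf : Measurable f) (h : G) :
    eLpNorm (fun x => f (h, x)) p μ ≤ eLpNorm f p (nuGX G μ) := by
  rw [← ENNReal.rpow_le_rpow_iff (ENNReal.toReal_pos hp0 hp), eLpNorm_nuGX_rpow_eq_tsum hp0 hp hf]
  exact ENNReal.le_tsum h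

theorem integrable_fiber_of_eLpNorm_lt_top [IsFiniteMeasure μ] (hp1 : 1 ≤ p) (hp : p ≠ ∞)
    {f : G × X → ℝ} (hf : Measurable f) (hfp : eLpNorm f p (nuGX G μ) < ∞) (h : G) :
    Integrable (fun x => f (h, x)) μ :=
  MemLp.integrable hp1 ⟨(hf.comp measurable_prodMk_left).aestronglyMeasurable,
    (eLpNorm_fiber_le (one_pos.trans_le hp1).ne' hp hf h).trans_lt hfp⟩

theorem eLpNorm_nuGX_le_of_fiberwise_le [SFinite μ] (hp0 : p ≠ 0) (hp : p ≠ ∞)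
    {f g : G × X → ℝ} (hf : Measurable f) (hg : Measurable g)
    (hfg : ∀ h, eLpNorm (fun x => f (h, x)) p μ ≤ eLpNorm (fun x => g (h, x)) p μ) :
    eLpNorm f p (nuGX G μ) ≤ eLpNorm g p (nuGX G μ) := by
  have hr : 0 < p.toReal := ENNReal.toReal_pos hp0 hp
  rw [← ENNReal.rpow_le_rpow_iff hr, eLpNorm_nuGX_rpow_eq_tsum hp0 hp hf,
    eLpNorm_nuGX_rpow_eq_tsum hp0 hp hg]
  exact ENNReal.tsum_le_tsum fun h => ENNReal.rpow_le_rpow (hfg h) hr.le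

theorem measurable_fiberAverage [Countable G] (f : G × X → ℝ) :
    Measurable (fiberAverage μ f) :=
  (measurable_of_countable fun h => ∫ t, f (h, t) ∂μ).comp measurable_fst

variable [IsProbabilityMeasure μ]

theorem eLpNorm_fiberAverage_le [Countable G] (hp1 : 1 ≤ p) (hp : p ≠ ∞) {f : G × X → ℝ}
    (hf : Measurable f) :
    eLpNorm (fiberAverage μ f) p (nuGX G μ) ≤ eLpNorm f p (nuGX G μ) := by
  refine eLpNorm_nuGX_le_of_fiberwise_le (one_pos.trans_le hp1).ne' hp
    (measurable_fiberAverage f) hf fun h => ?_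
  calc eLpNorm (fun _ => ∫ t, f (h, t) ∂μ) p μ = ‖∫ t, f (h, t) ∂μ‖ₑ := by
        simp [eLpNorm_const _ (one_pos.trans_le hp1).ne' (IsProbabilityMeasure.ne_zero μ)]
    _ ≤ ∫⁻ t, ‖f (h, t)‖ₑ ∂μ := enorm_integral_le_lintegral_enorm _
    _ = eLpNorm (fun t => f (h, t)) 1 μ := eLpNorm_one_eq_lintegral_enorm.symm
    _ ≤ eLpNorm (fun t => f (h, t)) p μ :=
        eLpNorm_le_eLpNorm_of_exponent_le hp1 (hf.comp measurable_prodMk_left).aestronglyMeasurable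

theorem eLpNorm_sub_fiberAverage_le_two_mul [Countable G] (hp1 : 1 ≤ p) (hp : p ≠ ∞)
    {f : G × X → ℝ} (hf : Measurable f) :
    eLpNorm (f - fiberAverage μ f) p (nuGX G μ) ≤ 2 * eLpNorm f p (nuGX G μ) :=
  calc eLpNorm (f - fiberAverage μ f) p (nuGX G μ)
      ≤ eLpNorm f p (nuGX G μ) + eLpNorm (fiberAverage μ f) p (nuGX G μ) :=
        eLpNorm_sub_le hf.aestronglyMeasurable
          (measurable_fiberAverage f).aestronglyMeasurable hp1
    _ ≤ 2 * eLpNorm f p (nuGX G μ) := by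
        rw [two_mul]; gcongr; exact eLpNorm_fiberAverage_le hp1 hp hf

theorem eLpNorm_sub_fiberAverage_le_two_mul_sub_fst [Countable G] (hp1 : 1 ≤ p) (hp : p ≠ ∞)
    {f : G × X → ℝ} (hf : Measurable f) (hfi : ∀ h, Integrable (fun x => f (h, x)) μ)
    (c : G → ℝ) :
    eLpNorm (f - fiberAverage μ f) p (nuGX G μ) ≤
      2 * eLpNorm (fun q => f q - c q.1) p (nuGX G μ) := by
  set F : G × X → ℝ := fun q => f q - c q.1
  have hF : f - fiberAverage μ f = F - fiberAverage μ F := by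
    ext q
    simp [F, fiberAverage, integral_sub (hfi q.1) (integrable_const (c q.1))]
  rw [hF]
  exact eLpNorm_sub_fiberAverage_le_two_mul hp1 hp
    (hf.sub ((measurable_of_countable c).comp measurable_fst))

theorem eLpNorm_sub_fiberAverage_le_four_mul_sqrt [Countable G]
    {ξ : G × X → ℝ} (hξ : Measurable ξ) (hξ0 : ∀ q, 0 ≤ ξ q) (hξ1 : eLpNorm ξ 1 (nuGX G μ) ≤ 1) :
    eLpNorm (ξ - fiberAverage μ ξ) 1 (nuGX G μ) ≤
      4 * eLpNorm ((fun q => √(ξ q)) - fiberAverage μ (fun q => √(ξ q))) 2 (nuGX G μ) := by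
  set η : G × X → ℝ := fun q => √(ξ q)
  have hη : Measurable η := hξ.sqrt
  have hη2 : eLpNorm η 2 (nuGX G μ) ≤ 1 := eLpNorm_sqrt_le_one hξ0 hξ1
  have hsum : eLpNorm (η + fiberAverage μ η) 2 (nuGX G μ) ≤ 2 :=
    calc eLpNorm (η + fiberAverage μ η) 2 (nuGX G μ)
        ≤ eLpNorm η 2 (nuGX G μ) + eLpNorm (fiberAverage μ η) 2 (nuGX G μ) :=
          eLpNorm_add_le hη.aestronglyMeasurable
            (measurable_fiberAverage (μ := μ) η).aestronglyMeasurable one_le_two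
      _ ≤ 1 + 1 := add_le_add hη2 ((eLpNorm_fiberAverage_le one_le_two (by simp) hη).trans hη2)
      _ = 2 := one_add_one_eq_two
  have hfactor : (fun q => ξ q - (fun h => (∫ t, η (h, t) ∂μ) ^ 2) q.1) =
      (η - fiberAverage μ η) * (η + fiberAverage μ η) := by
    ext q
    simp only [Pi.mul_apply, Pi.sub_apply, Pi.add_apply, fiberAverage, η]
    linear_combination (Real.sq_sqrt (hξ0 q)).symm
  have hHolder := eLpNorm_mul_le_mul_eLpNorm_two (m := nuGX G μ)
    (hη.sub (measurable_fiberAverage (μ := μ) η)).aestronglyMeasurable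
    (hη.add (measurable_fiberAverage (μ := μ) η)).aestronglyMeasurable
  have hξi : ∀ h, Integrable (fun x => ξ (h, x)) μ :=
    integrable_fiber_of_eLpNorm_lt_top le_rfl ENNReal.one_ne_top hξ
      (hξ1.trans_lt ENNReal.one_lt_top)
  calc eLpNorm (ξ - fiberAverage μ ξ) 1 (nuGX G μ)
      ≤ 2 * eLpNorm (fun q => ξ q - (fun h => (∫ t, η (h, t) ∂μ) ^ 2) q.1) 1 (nuGX G μ) :=
        eLpNorm_sub_fiberAverage_le_two_mul_sub_fst le_rfl ENNReal.one_ne_top hξ hξi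
          (fun h => (∫ t, η (h, t) ∂μ) ^ 2)
    _ ≤ 2 * (eLpNorm (η - fiberAverage μ η) 2 (nuGX G μ) * 2) := by
        rw [hfactor]
        gcongr
        exact hHolder.trans (by gcongr)
    _ = 4 * eLpNorm (η - fiberAverage μ η) 2 (nuGX G μ) := by ring

end FiberAverage

section ConjugationKoopman

variable {G X : Type*} [Group G] [MulAction G X] [MeasurableSpace X] {μ : Measure X}

def conjKoopman (g : G) (f : G × X → ℝ) : G × X → ℝ :=
  fun q => f (g⁻¹ * q.1 * g, g⁻¹ • q.2)

variable [MeasurableConstSMul G X] [SMulInvariantMeasure G X μ]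

theorem fiberAverage_conjKoopman (g : G) (f : G × X → ℝ) :
    fiberAverage μ (conjKoopman g f) = conjKoopman g (fiberAverage μ f) :=
  funext fun q => integral_smul_eq_self (fun t => f (g⁻¹ * q.1 * g, t))

theorem integrable_conjKoopman_fiber {f : G × X → ℝ}
    (hf : ∀ h, Integrable (fun x => f (h, x)) μ) (g h : G) :
    Integrable (fun x => conjKoopman g f (h, x)) μ :=
  ((measurePreserving_smul g⁻¹ μ).integrable_comp
    (hf (g⁻¹ * h * g)).aestronglyMeasurable).mpr (hf _)

variable [MeasurableSpace G] [MeasurableSingletonClass G] [Countable G] [IsProbabilityMeasure μ]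
  {p : ℝ≥0∞}

theorem measurable_conjKoopman {f : G × X → ℝ} (hf : Measurable f) (g : G) :
    Measurable (conjKoopman g f) :=
  hf.comp (((measurable_of_countable fun h : G => g⁻¹ * h * g).comp measurable_fst).prodMk
    ((measurable_const_smul g⁻¹).comp measurable_snd))

theorem eLpNorm_conjKoopman_sub_fiberAverage_le (hp1 : 1 ≤ p) (hp : p ≠ ∞) {f : G × X → ℝ}
    (hf : Measurable f) (hfi : ∀ h, Integrable (fun x => f (h, x)) μ) (g : G) :
    eLpNorm (conjKoopman g (f - fiberAverage μ f) - (f - fiberAverage μ f)) p (nuGX G μ) ≤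
      2 * eLpNorm (conjKoopman g f - f) p (nuGX G μ) := by
  -- `π(g)` commutes with `P`, hence with `1 - P`.
  have hcomm : conjKoopman g (f - fiberAverage μ f) - (f - fiberAverage μ f) =
      (conjKoopman g f - f) - fiberAverage μ (conjKoopman g f - f) := by
    rw [fiberAverage_sub (integrable_conjKoopman_fiber hfi g) hfi, fiberAverage_conjKoopman]
    ext q
    simp only [conjKoopman, Pi.sub_apply]
    ring
  rw [hcomm]
  exact eLpNorm_sub_fiberAverage_le_two_mul hp1 hp ((measurable_conjKoopman hf g).sub hf)

end ConjugationKoopman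

theorem four_mul_lt_ofReal_of_mul_le_two_mul {A B : ℝ≥0∞} {κ ε : ℝ} (hκ : 0 < κ) (hε : 0 < ε)
    (hA : ENNReal.ofReal κ * A ≤ 2 * B) (hB : B ^ 2 < ENNReal.ofReal ((κ * ε / 8) ^ 2)) :
    4 * A < ENNReal.ofReal ε := by
  have hB' : B < ENNReal.ofReal (κ * ε / 8) :=
    lt_of_pow_lt_pow_left' 2 (by rwa [← ENNReal.ofReal_pow (by positivity)])
  have hκ0 : ENNReal.ofReal κ ≠ 0 := by simpa using hκ
  refine (ENNReal.mul_lt_mul_iff_right hκ0 ENNReal.ofReal_ne_top).mp ?_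
  calc ENNReal.ofReal κ * (4 * A) = 4 * (ENNReal.ofReal κ * A) := by ring
    _ ≤ 4 * (2 * B) := by gcongr
    _ = 8 * B := by ring
    _ < 8 * ENNReal.ofReal (κ * ε / 8) :=
        (ENNReal.mul_lt_mul_iff_right (by norm_num) (by norm_num)).mpr hB'
    _ = ENNReal.ofReal κ * ENNReal.ofReal ε := by
        rw [← ENNReal.ofReal_mul hκ.le, ← ENNReal.ofReal_ofNat 8,
          ← ENNReal.ofReal_mul (by norm_num)]
        ring_nf

theorem l1_close_to_fiber_average_of_spectral_gap_general
    {G : Type*} [Group G] [Countable G] [MeasurableSpace G] [MeasurableSingletonClass G]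
    {X : Type*} [MeasurableSpace X]
    (μ : Measure X) [IsProbabilityMeasure μ] [MulAction G X]
    (hmp : ∀ g : G, MeasurePreserving (fun x : X => g • x) μ μ)
    (S₀ : Finset G) (κ : ℝ) (hκ : 0 < κ)
    (hgap : ∀ ξ : G × X → ℝ, MemLp ξ 2 (nuGX G μ) →
      (∀ h : G, ∫ x, ξ (h, x) ∂μ = 0) →
      ∃ g ∈ S₀, ENNReal.ofReal κ * eLpNorm ξ 2 (nuGX G μ) ≤
        eLpNorm (fun p : G × X => ξ (g⁻¹ * p.1 * g, g⁻¹ • p.2) - ξ p) 2 (nuGX G μ))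
    (ε : ℝ) (hε : 0 < ε) :
    ∃ (S : Finset G) (δ : ℝ), 0 < δ ∧
      ∀ ξ : G × X → ℝ, Measurable ξ → (∀ p, 0 ≤ ξ p) →
        eLpNorm ξ 1 (nuGX G μ) = 1 →
        (∀ g ∈ S,
          eLpNorm (fun p : G × X => ξ (g * p.1 * g⁻¹, g • p.2) - ξ p) 1 (nuGX G μ) <
            ENNReal.ofReal δ) →
        eLpNorm (fun p : G × X => ξ p - ∫ t, ξ (p.1, t) ∂μ) 1 (nuGX G μ) <
          ENNReal.ofReal ε := by
  classical
  have : MeasurableConstSMul G X := ⟨fun g => (hmp g).measurable⟩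
  have : SMulInvariantMeasure G X μ :=
    ⟨fun g _ hs => (hmp g).measure_preimage hs.nullMeasurableSet⟩
  refine ⟨S₀.image (·⁻¹), (κ * ε / 8) ^ 2, by positivity, fun ξ hξ hξ0 hξ1 hS => ?_⟩
  set η : G × X → ℝ := fun q => √(ξ q)
  have hη : Measurable η := hξ.sqrt
  have hη2 : eLpNorm η 2 (nuGX G μ) ≤ 1 := eLpNorm_sqrt_le_one hξ0 hξ1.le
  have hηi := integrable_fiber_of_eLpNorm_lt_top one_le_two (by simp) hη
    (hη2.trans_lt ENNReal.one_lt_top)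
  have hη₀ : MemLp (η - fiberAverage μ η) 2 (nuGX G μ) :=
    ⟨(hη.sub (measurable_fiberAverage η)).aestronglyMeasurable,
      (eLpNorm_sub_fiberAverage_le_two_mul one_le_two (by simp) hη).trans_lt
        (ENNReal.mul_lt_top (by simp) (hη2.trans_lt ENNReal.one_lt_top))⟩
  obtain ⟨g, hg, hκg⟩ := hgap _ hη₀ (integral_sub_fiberAverage η)
  have hδ := hS g⁻¹ (Finset.mem_image_of_mem _ hg)
  simp only [inv_inv] at hδ
  have hB : eLpNorm (conjKoopman g η - η) 2 (nuGX G μ) ^ 2 <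
      ENNReal.ofReal ((κ * ε / 8) ^ 2) :=
    (eLpNorm_sqrt_sub_sqrt_sq_le (fun _ => hξ0 _) hξ0).trans_lt hδ
  calc eLpNorm (ξ - fiberAverage μ ξ) 1 (nuGX G μ)
      ≤ 4 * eLpNorm (η - fiberAverage μ η) 2 (nuGX G μ) :=
        eLpNorm_sub_fiberAverage_le_four_mul_sqrt hξ hξ0 hξ1.le
    _ < ENNReal.ofReal ε :=
        four_mul_lt_ofReal_of_mul_le_two_mul hκ hε
          (hκg.trans (eLpNorm_conjKoopman_sub_fiberAverage_le one_le_two (by simp) hη hηi g)) hB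

/-- Let `G` be a countable group with a measure-preserving action on a standard Borel
probability space `(X, μ)` whose conjugation–Koopman representation
`(π(g)ξ)(h, x) = ξ(g⁻¹ h g, g⁻¹ • x)` on `L²(G × X, ν)` has spectral gap (with respect to
the mean-zero-on-every-fiber subspace).  Then for every `ε > 0` there are a finite `S ⊆ G`
and `δ > 0` such that every nonnegative measurable `ξ` on `G × X` with `‖ξ‖₁ = 1` and
`‖ξ^g - ξ‖₁ < δ` for all `g ∈ S` (where `ξ^g (h, x) = ξ (g h g⁻¹, g • x)`) satisfies
`‖ξ - Pξ‖₁ < ε`, where `(Pξ)(h, x) = ∫ ξ(h, t) dμ(t)`. -/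
theorem l1_close_to_fiber_average_of_spectral_gap
    {G : Type*} [Group G] [Countable G] [MeasurableSpace G] [MeasurableSingletonClass G]
    {X : Type*} [MeasurableSpace X] [StandardBorelSpace X]
    (μ : Measure X) [IsProbabilityMeasure μ] [MulAction G X]
    (hmp : ∀ g : G, MeasurePreserving (fun x : X => g • x) μ μ)
    (S₀ : Finset G) (κ : ℝ) (hκ : 0 < κ)
    (hgap : ∀ ξ : G × X → ℝ, MemLp ξ 2 (nuGX G μ) →
      (∀ h : G, ∫ x, ξ (h, x) ∂μ = 0) →
      ∃ g ∈ S₀, ENNReal.ofReal κ * eLpNorm ξ 2 (nuGX G μ) ≤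
        eLpNorm (fun p : G × X => ξ (g⁻¹ * p.1 * g, g⁻¹ • p.2) - ξ p) 2 (nuGX G μ))
    (ε : ℝ) (hε : 0 < ε) :
    ∃ (S : Finset G) (δ : ℝ), 0 < δ ∧
      ∀ ξ : G × X → ℝ, Measurable ξ → (∀ p, 0 ≤ ξ p) →
        eLpNorm ξ 1 (nuGX G μ) = 1 →
        (∀ g ∈ S,
          eLpNorm (fun p : G × X => ξ (g * p.1 * g⁻¹, g • p.2) - ξ p) 1 (nuGX G μ) <
            ENNReal.ofReal δ) →
        eLpNorm (fun p : G × X => ξ p - ∫ t, ξ (p.1, t) ∂μ) 1 (nuGX G μ) <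
          ENNReal.ofReal ε :=
  l1_close_to_fiber_average_of_spectral_gap_general μ hmp S₀ κ hκ hgap ε hε
end

section
/- Let G be a countable discrete group with a measure-preserving action on a standard Borel probability space (X, μ), and assume the conjugation–Koopman representation has spectral gap, i.e., there exist a finite set S₀ ⊆ G and κ > 0 such that every ξ ∈ L²(G × X, ν) satisfying ∫_X ξ(h, x) dμ(x) = 0 for every h ∈ G obeys max_{g∈S₀} ‖π(g)ξ − ξ‖₂ ≥ κ‖ξ‖₂. Then for every ε > 0 and every finite subset F ⊆ G there exist a finite subset S ⊆ G and δ > 0 such that for every measurable map f : X → G satisfying μ({x ∈ X : f(g·x)·g = g·f(x)}) > 1 − δ for all g ∈ S, there exists g₀ ∈ G which commutes with every element of F and satisfies μ({x ∈ X : f(x) = g₀}) > 1 − ε. -/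
/-!
For measurable `f : X → G` put `pₕ = μ (f = h)` and let `ξ_f (h, x) = 1[f x = h] - pₕ` be the
graph of `f`, centred in each fibre `{h} × X`. Then `‖ξ_f‖₂² = ∑ₕ pₕ (1 - pₕ)`, and `π(g) ξ_f` is
the centred graph of the conjugate `x ↦ g f(g⁻¹ x) g⁻¹`, which disagrees with `f` on a set of
measure `< δ` when `f` `δ`-almost commutes with `g`. Centring is a fibrewise variance, so it does
not increase `L²` norms, and `‖π(g) ξ_f - ξ_f‖₂² ≤ 2δ`. The spectral gap therefore makes
`∑ₕ pₕ (1 - pₕ) ≤ ∑ₕ pₕ = 1` small, which forces one fibre `{f = g₀}` to have measure close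
to `1`. For `g ∈ F` the sets `{f = g₀}`, `g⁻¹ {f = g₀}` and `{f (g x) g = g f x}` are then large
enough to meet, and at a common point `g₀ g = g g₀`.
-/

open Filter Topology MeasureTheory ProbabilityTheory
open scoped ENNReal symmDiff

lemma ENNReal.exists_one_sub_lt_of_tsum_mul_one_sub_lt {ι : Type*} {p : ι → ℝ≥0∞}
    (hp : ∑' i, p i = 1) {t : ℝ≥0∞} (ht : ∑' i, p i * (1 - p i) < t) : ∃ i, 1 - p i < t := by
  by_contra! h
  refine ht.not_ge ?_
  calc t = ∑' i, p i * t := by rw [ENNReal.tsum_mul_right, hp, one_mul]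
    _ ≤ ∑' i, p i * (1 - p i) := ENNReal.tsum_le_tsum fun i => mul_le_mul_right (h i) _

lemma Set.enorm_indicator_one_sq {X : Type*} (s : Set X) (x : X) :
    ‖s.indicator (1 : X → ℝ) x‖ₑ ^ 2 = s.indicator 1 x := by
  by_cases hx : x ∈ s <;> simp [hx]

lemma Set.symmDiff_preimage_singleton_subset {X G : Type*} (φ ψ : X → G) (h : G) :
    (φ ⁻¹' {h}) ∆ (ψ ⁻¹' {h}) ⊆ (φ ⁻¹' {h} ∪ ψ ⁻¹' {h}) ∩ {x | φ x ≠ ψ x} := by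
  rintro x (⟨hφx, hψx⟩ | ⟨hψx, hφx⟩)
  · exact ⟨Or.inl hφx, fun hx => hψx (by rw [Set.mem_preimage, ← hx]; exact hφx)⟩
  · exact ⟨Or.inr hψx, fun hx => hφx (by rw [Set.mem_preimage, hx]; exact hψx)⟩

namespace MeasureTheory

variable {X : Type*} [MeasurableSpace X] {μ : Measure X}

lemma nonempty_inter_inter_of_measure_compl_add_lt {s t u : Set X}
    (h : μ sᶜ + μ tᶜ + μ uᶜ < μ Set.univ) : (s ∩ t ∩ u).Nonempty := by
  by_contra hne
  have hcover : Set.univ ⊆ sᶜ ∪ tᶜ ∪ uᶜ := fun x _ => by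
    by_contra hx
    exact hne ⟨x, by simpa [not_or] using hx⟩
  exact h.not_ge ((measure_mono hcover).trans
    ((measure_union_le _ _).trans (add_le_add_left (measure_union_le _ _) _)))

lemma measure_compl_lt_ofReal_iff [IsProbabilityMeasure μ] {s : Set X} (hs : MeasurableSet s)
    {a : ℝ} : μ sᶜ < ENNReal.ofReal a ↔ 1 - a < μ.real s := by
  rw [ENNReal.lt_ofReal_iff_toReal_lt (measure_ne_top _ _), ← measureReal_def,
    probReal_compl_eq_one_sub hs]
  constructor <;> intro h <;> linarith

lemma lintegral_enorm_indicator_one_sub_sq {s t : Set X} (hs : MeasurableSet s)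
    (ht : MeasurableSet t) :
    ∫⁻ x, ‖s.indicator (1 : X → ℝ) x - t.indicator 1 x‖ₑ ^ 2 ∂μ = μ (s ∆ t) := by
  simp_rw [← Set.apply_indicator_symmDiff (g := fun r : ℝ => ‖r‖ₑ ^ 2) (by simp),
    Set.enorm_indicator_one_sq]
  exact lintegral_indicator_one (hs.symmDiff ht)

lemma tsum_measure_preimage_singleton_eq_univ {G : Type*} [MeasurableSpace G] [Countable G]
    [MeasurableSingletonClass G] {φ : X → G} (hφ : Measurable φ) (μ : Measure X) :
    ∑' h, μ (φ ⁻¹' {h}) = μ Set.univ := by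
  rw [← measure_iUnion (pairwise_disjoint_fiber φ) fun h => hφ (measurableSet_singleton h),
    ← Set.preimage_iUnion, Set.iUnion_of_singleton, Set.preimage_univ]

end MeasureTheory

namespace ProbabilityTheory

variable {X : Type*} [MeasurableSpace X] {μ : Measure X} [IsProbabilityMeasure μ]

lemma evariance_indicator_one {s : Set X} (hs : MeasurableSet s) :
    evariance (s.indicator 1) μ = μ s * (1 - μ s) := by
  rw [evariance_def' ((measurable_one.indicator hs).aestronglyMeasurable)]
  simp_rw [Set.enorm_indicator_one_sq]
  rw [lintegral_indicator_one hs, integral_indicator_one hs,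
    ENNReal.ofReal_pow measureReal_nonneg, measureReal_def,
    ENNReal.ofReal_toReal (measure_ne_top _ _), ENNReal.mul_sub fun _ _ => measure_ne_top _ _,
    mul_one, sq]

lemma evariance_le_lintegral_enorm_sq {Y : X → ℝ}
    (hY : AEStronglyMeasurable Y μ) : evariance Y μ ≤ ∫⁻ x, ‖Y x‖ₑ ^ 2 ∂μ := by
  rw [evariance_def' hY]
  exact tsub_le_self

end ProbabilityTheory

section Graph

variable {G X : Type*} [MeasurableSpace G] [MeasurableSpace X]

noncomputable def centeredGraphIndicator (μ : Measure X) (φ : X → G) (z : G × X) : ℝ :=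
  (φ ⁻¹' {z.1}).indicator 1 z.2 - μ.real (φ ⁻¹' {z.1})

variable [MeasurableSingletonClass G] {μ : Measure X} {φ ψ : X → G}

lemma measurable_centeredGraphIndicator_apply (hφ : Measurable φ) (h : G) :
    Measurable fun x => centeredGraphIndicator μ φ (h, x) :=
  (measurable_one.indicator (hφ (measurableSet_singleton h))).sub_const (μ.real (φ ⁻¹' {h}))

lemma integral_centeredGraphIndicator [IsProbabilityMeasure μ] (hφ : Measurable φ) (h : G) :
    ∫ x, centeredGraphIndicator μ φ (h, x) ∂μ = 0 := by
  have hs := hφ (measurableSet_singleton h)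
  simp only [centeredGraphIndicator]
  rw [integral_sub ((integrable_const 1).indicator hs)
    (integrable_const _), integral_indicator_one hs, integral_const, probReal_univ, one_smul,
    sub_self]

lemma lintegral_enorm_centeredGraphIndicator_sq [IsProbabilityMeasure μ] (hφ : Measurable φ)
    (h : G) : ∫⁻ x, ‖centeredGraphIndicator μ φ (h, x)‖ₑ ^ 2 ∂μ =
      μ (φ ⁻¹' {h}) * (1 - μ (φ ⁻¹' {h})) := by
  have hs := hφ (measurableSet_singleton h)
  rw [← evariance_indicator_one hs, evariance, integral_indicator_one hs]
  rfl

lemma lintegral_enorm_centeredGraphIndicator_sub_sq_le [IsProbabilityMeasure μ]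
    (hφ : Measurable φ) (hψ : Measurable ψ) (h : G) :
    ∫⁻ x, ‖centeredGraphIndicator μ φ (h, x) - centeredGraphIndicator μ ψ (h, x)‖ₑ ^ 2 ∂μ ≤
      μ ((φ ⁻¹' {h}) ∆ (ψ ⁻¹' {h})) := by
  have hs := hφ (measurableSet_singleton h)
  have ht := hψ (measurableSet_singleton h)
  set Y : X → ℝ := fun x => (φ ⁻¹' {h}).indicator 1 x - (ψ ⁻¹' {h}).indicator 1 x
  have hY : μ[Y] = μ.real (φ ⁻¹' {h}) - μ.real (ψ ⁻¹' {h}) := by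
    rw [integral_sub ((integrable_const 1).indicator hs) ((integrable_const 1).indicator ht),
      integral_indicator_one hs, integral_indicator_one ht]
  calc _ = evariance Y μ := by
        rw [evariance, hY]
        congr with x
        simp only [centeredGraphIndicator, Y]
        ring_nf
    _ ≤ ∫⁻ x, ‖Y x‖ₑ ^ 2 ∂μ := evariance_le_lintegral_enorm_sq
        ((measurable_one.indicator hs).sub (measurable_one.indicator ht)).aestronglyMeasurable
    _ = _ := lintegral_enorm_indicator_one_sub_sq hs ht

variable [Countable G]

lemma sq_eLpNorm_nuGX [SFinite μ] {w : G × X → ℝ} (hw : ∀ h, Measurable fun x => w (h, x)) :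
    eLpNorm w 2 (nuGX G μ) ^ 2 = ∑' h, ∫⁻ x, ‖w (h, x)‖ₑ ^ 2 ∂μ := by
  have h := eLpNorm_nnreal_pow_eq_lintegral (f := w) (μ := nuGX G μ) (p := 2) two_ne_zero
  simp only [NNReal.coe_ofNat, ENNReal.rpow_ofNat, ENNReal.coe_ofNat] at h
  rw [h, nuGX, lintegral_prod _
    ((measurable_from_prod_countable_right hw).enorm.pow_const 2).aemeasurable, lintegral_count]

variable [IsProbabilityMeasure μ]

lemma sq_eLpNorm_centeredGraphIndicator (hφ : Measurable φ) :
    eLpNorm (centeredGraphIndicator μ φ) 2 (nuGX G μ) ^ 2 =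
      ∑' h, μ (φ ⁻¹' {h}) * (1 - μ (φ ⁻¹' {h})) := by
  rw [sq_eLpNorm_nuGX (measurable_centeredGraphIndicator_apply hφ)]
  exact tsum_congr (lintegral_enorm_centeredGraphIndicator_sq hφ)

lemma memLp_centeredGraphIndicator (hφ : Measurable φ) :
    MemLp (centeredGraphIndicator μ φ) 2 (nuGX G μ) := by
  refine ⟨(measurable_from_prod_countable_right
    (measurable_centeredGraphIndicator_apply hφ)).aestronglyMeasurable, ?_⟩
  have hsq : eLpNorm (centeredGraphIndicator μ φ) 2 (nuGX G μ) ^ 2 ≤ 1 := by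
    calc _ ≤ ∑' h, μ (φ ⁻¹' {h}) := by
          rw [sq_eLpNorm_centeredGraphIndicator hφ]
          exact ENNReal.tsum_le_tsum fun h => mul_le_of_le_one_right' tsub_le_self
      _ = 1 := by rw [tsum_measure_preimage_singleton_eq_univ hφ, measure_univ]
  exact lt_top_iff_ne_top.2 fun htop => by simp [htop] at hsq

lemma sq_eLpNorm_centeredGraphIndicator_sub_le (hφ : Measurable φ) (hψ : Measurable ψ) :
    eLpNorm (fun z => centeredGraphIndicator μ φ z - centeredGraphIndicator μ ψ z) 2
      (nuGX G μ) ^ 2 ≤ 2 * μ {x | φ x ≠ ψ x} := by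
  set D := {x | φ x ≠ ψ x}
  rw [sq_eLpNorm_nuGX fun h => (measurable_centeredGraphIndicator_apply hφ h).sub
    (measurable_centeredGraphIndicator_apply hψ h)]
  calc _ ≤ ∑' h, (μ.restrict D (φ ⁻¹' {h}) + μ.restrict D (ψ ⁻¹' {h})) := by
        refine ENNReal.tsum_le_tsum fun h =>
          (lintegral_enorm_centeredGraphIndicator_sub_sq_le hφ hψ h).trans ?_
        rw [Measure.restrict_apply (hφ (measurableSet_singleton h)),
          Measure.restrict_apply (hψ (measurableSet_singleton h))]
        refine (measure_mono (Set.symmDiff_preimage_singleton_subset φ ψ h)).trans ?_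
        rw [Set.union_inter_distrib_right]
        exact measure_union_le _ _
    _ = 2 * μ D := by
        rw [ENNReal.tsum_add, tsum_measure_preimage_singleton_eq_univ hφ,
          tsum_measure_preimage_singleton_eq_univ hψ, Measure.restrict_apply_univ, two_mul]

end Graph

def HasConjugationSpectralGap {G X : Type*} [Group G] [MeasurableSpace G] [MeasurableSpace X]
    [MulAction G X] (μ : Measure X) (S₀ : Finset G) (κ : ℝ) : Prop :=
  ∀ ξ : G × X → ℝ, MemLp ξ 2 (nuGX G μ) → (∀ h : G, ∫ x, ξ (h, x) ∂μ = 0) →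
    ∃ g ∈ S₀, ENNReal.ofReal κ * eLpNorm ξ 2 (nuGX G μ) ≤
      eLpNorm (fun p : G × X => ξ (g⁻¹ * p.1 * g, g⁻¹ • p.2) - ξ p) 2 (nuGX G μ)

section Action

variable {G X : Type*} [Group G] [MeasurableSpace G] [MeasurableSingletonClass G]
  [MeasurableSpace X] [MulAction G X] {μ : Measure X} {f : X → G}

lemma centeredGraphIndicator_conj {g : G} (hg : MeasurePreserving (g⁻¹ • · : X → X) μ μ)
    (hf : Measurable f) (z : G × X) :
    centeredGraphIndicator μ f (g⁻¹ * z.1 * g, g⁻¹ • z.2) =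
      centeredGraphIndicator μ (fun x => g * f (g⁻¹ • x) * g⁻¹) z := by
  have hfiber : (fun x => g * f (g⁻¹ • x) * g⁻¹) ⁻¹' {z.1} =
      (g⁻¹ • · : X → X) ⁻¹' (f ⁻¹' {g⁻¹ * z.1 * g}) := by
    ext x
    simp only [Set.mem_preimage, Set.mem_singleton_iff]
    constructor
    · intro hx; rw [← hx]; group
    · intro hx; rw [hx]; group
  rw [centeredGraphIndicator, centeredGraphIndicator, hfiber, Measure.real, Measure.real,
    hg.measure_preimage (hf (measurableSet_singleton _)).nullMeasurableSet]
  rfl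

theorem commute_of_measure_compl_fiber_lt [IsProbabilityMeasure μ] {g g₀ : G}
    (hg : MeasurePreserving (g • · : X → X) μ μ) (hf : Measurable f) {t δ : ℝ≥0∞}
    (hg₀ : μ (f ⁻¹' {g₀})ᶜ < t) (hcomm : μ {x | f (g • x) * g = g * f x}ᶜ < δ)
    (htδ : t + δ + t ≤ 1) : g₀ * g = g * g₀ := by
  have hfiber := hf (measurableSet_singleton g₀)
  have htranslate : μ ((g • · : X → X) ⁻¹' (f ⁻¹' {g₀}))ᶜ < t := by
    rwa [← Set.preimage_compl, hg.measure_preimage hfiber.compl.nullMeasurableSet]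
  have hsum : μ (f ⁻¹' {g₀})ᶜ + μ {x | f (g • x) * g = g * f x}ᶜ +
      μ ((g • · : X → X) ⁻¹' (f ⁻¹' {g₀}))ᶜ < μ Set.univ := by
    rw [measure_univ]
    exact (ENNReal.add_lt_add (ENNReal.add_lt_add hg₀ hcomm) htranslate).trans_le htδ
  obtain ⟨x, ⟨hx, hxcomm⟩, hgx⟩ := nonempty_inter_inter_of_measure_compl_add_lt hsum
  simp only [Set.mem_preimage, Set.mem_singleton_iff, Set.mem_ofPred_eq] at hx hxcomm hgx
  rwa [hx, hgx] at hxcomm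

variable [Countable G]

lemma measurableSet_setOf_mul_eq_mul {g : G} (hg : Measurable (g • · : X → X))
    (hf : Measurable f) : MeasurableSet {x | f (g • x) * g = g * f x} :=
  measurableSet_eq_fun ((Measurable.of_discrete (f := (· * g))).comp (hf.comp hg))
    ((Measurable.of_discrete (f := (g * ·))).comp hf)

lemma measure_setOf_conj_ne (hmp : ∀ g : G, MeasurePreserving (g • · : X → X) μ μ)
    (hf : Measurable f) (g : G) :
    μ {x | g * f (g⁻¹ • x) * g⁻¹ ≠ f x} = μ {x | f (g • x) * g = g * f x}ᶜ := by
  rw [← (hmp g⁻¹).measure_preimage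
    (measurableSet_setOf_mul_eq_mul (hmp g).measurable hf).compl.nullMeasurableSet]
  congr 1
  ext x
  simp only [Set.preimage_compl, Set.mem_compl_iff, Set.mem_preimage, Set.mem_ofPred_eq,
    smul_inv_smul]
  rw [ne_eq, mul_inv_eq_iff_eq_mul, eq_comm]

theorem exists_measure_compl_fiber_lt_of_hasConjugationSpectralGap [IsProbabilityMeasure μ]
    (hmp : ∀ g : G, MeasurePreserving (g • · : X → X) μ μ) {S₀ : Finset G} {κ : ℝ}
    (hgap : HasConjugationSpectralGap μ S₀ κ) (hf : Measurable f) {t : ℝ≥0∞}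
    (hS₀ : ∀ g ∈ S₀, 2 * μ {x | f (g • x) * g = g * f x}ᶜ < ENNReal.ofReal κ ^ 2 * t) :
    ∃ g₀, μ (f ⁻¹' {g₀})ᶜ < t := by
  obtain ⟨g, hgS₀, hg⟩ := hgap _ (memLp_centeredGraphIndicator hf)
    (integral_centeredGraphIndicator hf)
  simp only [centeredGraphIndicator_conj (hmp g⁻¹) hf] at hg
  have hconj : Measurable fun x => g * f (g⁻¹ • x) * g⁻¹ :=
    (Measurable.of_discrete (f := fun a => g * a * g⁻¹)).comp (hf.comp (hmp g⁻¹).measurable)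
  have key : ENNReal.ofReal κ ^ 2 * ∑' h, μ (f ⁻¹' {h}) * (1 - μ (f ⁻¹' {h})) <
      ENNReal.ofReal κ ^ 2 * t := calc
    _ = (ENNReal.ofReal κ * eLpNorm (centeredGraphIndicator μ f) 2 (nuGX G μ)) ^ 2 := by
        rw [mul_pow, sq_eLpNorm_centeredGraphIndicator hf]
    _ ≤ _ := pow_le_pow_left₀ (by positivity) hg 2
    _ ≤ 2 * μ {x | g * f (g⁻¹ • x) * g⁻¹ ≠ f x} :=
        sq_eLpNorm_centeredGraphIndicator_sub_le hconj hf
    _ < _ := by rw [measure_setOf_conj_ne hmp hf]; exact hS₀ g hgS₀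
  obtain ⟨g₀, hg₀⟩ := ENNReal.exists_one_sub_lt_of_tsum_mul_one_sub_lt
    (by rw [tsum_measure_preimage_singleton_eq_univ hf, measure_univ])
    (lt_of_mul_lt_mul_left' key)
  exact ⟨g₀, by rwa [prob_compl_eq_one_sub (hf (measurableSet_singleton g₀))]⟩

theorem exists_almost_central_of_hasConjugationSpectralGap [IsProbabilityMeasure μ]
    (hmp : ∀ g : G, MeasurePreserving (g • · : X → X) μ μ) {S₀ F : Finset G} {κ : ℝ}
    (hgap : HasConjugationSpectralGap μ S₀ κ) (hf : Measurable f) {t δ : ℝ≥0∞}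
    (hδκ : 2 * δ ≤ ENNReal.ofReal κ ^ 2 * t) (htδ : t + δ + t ≤ 1)
    (hS₀ : ∀ g ∈ S₀, μ {x | f (g • x) * g = g * f x}ᶜ < δ)
    (hF : ∀ g ∈ F, μ {x | f (g • x) * g = g * f x}ᶜ < δ) :
    ∃ g₀, (∀ g ∈ F, g₀ * g = g * g₀) ∧ μ (f ⁻¹' {g₀})ᶜ < t := by
  obtain ⟨g₀, hg₀⟩ := exists_measure_compl_fiber_lt_of_hasConjugationSpectralGap hmp hgap hf
    fun g hg => (ENNReal.mul_lt_mul_right two_ne_zero ENNReal.ofNat_ne_top (hS₀ g hg)).trans_le hδκ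
  exact ⟨g₀, fun g hg => commute_of_measure_compl_fiber_lt (hmp g) hf hg₀ (hF g hg) htδ, hg₀⟩

end Action

theorem almost_central_full_group_element_of_spectral_gap_general
    {G : Type*} [Group G] [Countable G] [MeasurableSpace G] [MeasurableSingletonClass G]
    {X : Type*} [MeasurableSpace X]
    (μ : Measure X) [IsProbabilityMeasure μ] [MulAction G X]
    (hmp : ∀ g : G, MeasurePreserving (fun x : X => g • x) μ μ)
    (S₀ : Finset G) (κ : ℝ) (hκ : 0 < κ)
    (hgap : ∀ ξ : G × X → ℝ, MemLp ξ 2 (nuGX G μ) →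
      (∀ h : G, ∫ x, ξ (h, x) ∂μ = 0) →
      ∃ g ∈ S₀, ENNReal.ofReal κ * eLpNorm ξ 2 (nuGX G μ) ≤
        eLpNorm (fun p : G × X => ξ (g⁻¹ * p.1 * g, g⁻¹ • p.2) - ξ p) 2 (nuGX G μ))
    (ε : ℝ) (hε : 0 < ε) (F : Finset G) :
    ∃ (S : Finset G) (δ : ℝ), 0 < δ ∧
      ∀ f : X → G, Measurable f →
        (∀ g ∈ S, 1 - δ < (μ {x : X | f (g • x) * g = g * f x}).toReal) →
        ∃ g₀ : G, (∀ g ∈ F, g₀ * g = g * g₀) ∧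
          1 - ε < (μ {x : X | f x = g₀}).toReal := by
  classical
  set t := min ε (1 / 4)
  have ht : 0 < t := lt_min hε (by norm_num)
  set δ := min (κ ^ 2 * t / 2) (1 / 2)
  have hδ : 0 < δ := lt_min (by positivity) (by norm_num)
  refine ⟨S₀ ∪ F, δ, hδ, fun f hf hS => ?_⟩
  have hcomm (g) (hg : g ∈ S₀ ∪ F) : μ {x | f (g • x) * g = g * f x}ᶜ < ENNReal.ofReal δ :=
    (measure_compl_lt_ofReal_iff (measurableSet_setOf_mul_eq_mul (hmp g).measurable hf)).2
      (hS g hg)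
  have hδκ : 2 * ENNReal.ofReal δ ≤ ENNReal.ofReal κ ^ 2 * ENNReal.ofReal t := by
    rw [← ENNReal.ofReal_pow hκ.le, ← ENNReal.ofReal_mul (sq_nonneg κ), ← ENNReal.ofReal_ofNat 2,
      ← ENNReal.ofReal_mul zero_le_two]
    exact ENNReal.ofReal_le_ofReal (by linarith [min_le_left (κ ^ 2 * t / 2) (1 / 2)])
  have htδ : ENNReal.ofReal t + ENNReal.ofReal δ + ENNReal.ofReal t ≤ 1 := by
    rw [← ENNReal.ofReal_add ht.le hδ.le, ← ENNReal.ofReal_add (by positivity) ht.le,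
      ← ENNReal.ofReal_one]
    exact ENNReal.ofReal_le_ofReal
      (by linarith [min_le_right ε (1 / 4), min_le_right (κ ^ 2 * t / 2) (1 / 2)])
  obtain ⟨g₀, hF, hg₀⟩ := exists_almost_central_of_hasConjugationSpectralGap hmp hgap hf hδκ htδ
    (fun g hg => hcomm g (Finset.mem_union_left F hg))
    (fun g hg => hcomm g (Finset.mem_union_right S₀ hg))
  refine ⟨g₀, hF, ?_⟩
  have := (measure_compl_lt_ofReal_iff (hf (measurableSet_singleton g₀))).1 hg₀
  exact lt_of_le_of_lt (by linarith [min_le_left ε (1 / 4)]) this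

/-- Let `G` be a countable group with a measure-preserving action on a standard Borel
probability space `(X, μ)` whose conjugation–Koopman representation
`(π(g)ξ)(h, x) = ξ(g⁻¹ h g, g⁻¹ • x)` on `L²(G × X, ν)` has spectral gap.  Then for every
`ε > 0` and finite `F ⊆ G` there are a finite `S ⊆ G` and `δ > 0` such that every measurable
`f : X → G` (encoding the element `x ↦ (f x) • x` of the full group of the translation
groupoid) which `δ`-almost commutes with every `g ∈ S` is `ε`-close to a group element `g₀`
commuting with all of `F`. -/
theorem almost_central_full_group_element_of_spectral_gap
    {G : Type*} [Group G] [Countable G] [MeasurableSpace G] [MeasurableSingletonClass G]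
    {X : Type*} [MeasurableSpace X] [StandardBorelSpace X]
    (μ : Measure X) [IsProbabilityMeasure μ] [MulAction G X]
    (hmp : ∀ g : G, MeasurePreserving (fun x : X => g • x) μ μ)
    (S₀ : Finset G) (κ : ℝ) (hκ : 0 < κ)
    (hgap : ∀ ξ : G × X → ℝ, MemLp ξ 2 (nuGX G μ) →
      (∀ h : G, ∫ x, ξ (h, x) ∂μ = 0) →
      ∃ g ∈ S₀, ENNReal.ofReal κ * eLpNorm ξ 2 (nuGX G μ) ≤
        eLpNorm (fun p : G × X => ξ (g⁻¹ * p.1 * g, g⁻¹ • p.2) - ξ p) 2 (nuGX G μ))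
    (ε : ℝ) (hε : 0 < ε) (F : Finset G) :
    ∃ (S : Finset G) (δ : ℝ), 0 < δ ∧
      ∀ f : X → G, Measurable f →
        (∀ g ∈ S, 1 - δ < (μ {x : X | f (g • x) * g = g * f x}).toReal) →
        ∃ g₀ : G, (∀ g ∈ F, g₀ * g = g * g₀) ∧
          1 - ε < (μ {x : X | f x = g₀}).toReal :=
  almost_central_full_group_element_of_spectral_gap_general μ hmp S₀ κ hκ hgap ε hε F
end

section
/- Let G be a countable discrete group with measure-preserving actions on standard Borel probability spaces (X, μ) and (Y, ν₀), and let G act diagonally on (X × Y, μ ⊗ ν₀). Assume there exist a finite set S₀ ⊆ G and κ > 0 such that every ξ ∈ L²(G × X × Y, ν) satisfying, for every h ∈ G and ν₀-almost every y ∈ Y, ∫_X ξ(h, x, y) dμ(x) = 0, obeys max_{g∈S₀} ‖π(g)ξ − ξ‖₂ ≥ κ‖ξ‖₂, where (π(g)ξ)(h, x, y) := ξ(g⁻¹ h g, g⁻¹·x, g⁻¹·y). Then for every ε > 0 there exist a finite subset S ⊆ G and δ > 0 such that for every measurable map f : X × Y → G satisfying (μ⊗ν₀)({z : f(g·z) =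 g·f(z)·g⁻¹}) > 1 − δ for all g ∈ S, there exist a measurable subset Y' ⊆ Y, a finite measurable partition Y' = Y₁ ⊔ ⋯ ⊔ Y_m, and elements g₁, …, g_m ∈ G such that ν₀(Y') > 1 − ε and, for every i and almost every y ∈ Y_i, μ({x ∈ X : f(x, y) = g_i}) > 1 − ε. -/
/-!
Let `ξ` be the indicator of the graph `{(f z, z)}` of `f` in `L²(G × X × Y)` and let `E` average
over the `X`-coordinate, so that `Eξ (h, x, y) = μ {x' | f (x', y) = h}`. Then `ζ = ξ - Eξ` has
vanishing fibre integrals, and `‖ζ‖² = ∫ ∑ₕ pₕ(y) (1 - pₕ(y)) dν₀(y)` is the mean Gini impurity of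
the distributions `p(y)` of `f (·, y)`. As `E` is an `L²`-contraction commuting with `π(g)`, we get
`‖π(g)ζ - ζ‖ ≤ 2 ‖π(g)ξ - ξ‖`, and `‖π(g)ξ - ξ‖²` is twice the measure of the set where `f` fails
to commute with `g`. So the spectral gap makes the mean impurity small; by Markov's inequality
most fibres have small impurity, hence a value of mass `> 1 - ε`. The sets where a given value
dominates are disjoint, and finitely many of them carry almost all of `ν₀`.
-/

open Filter Topology MeasureTheory
open scoped ENNReal

/-- The natural measure on `G × Z`: the product of the counting measure on the countable
discrete group `G` with the probability measure on `Z`. -/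
noncomputable def nuG (G : Type*) {Z : Type*} [MeasurableSpace G] [MeasurableSpace Z]
    (ζ : Measure Z) : Measure (G × Z) :=
  (Measure.count : Measure G).prod ζ

section Lp
variable {α : Type*} [MeasurableSpace α] {μ : Measure α}

theorem eLpNorm_two_sq (f : α → ℝ) : eLpNorm f 2 μ ^ 2 = ∫⁻ x, ‖f x‖ₑ ^ 2 ∂μ := by
  have := eLpNorm_nnreal_pow_eq_lintegral (μ := μ) (f := f) (p := 2) two_ne_zero
  norm_num at this
  exact_mod_cast this

theorem enorm_integral_sq_le [IsProbabilityMeasure μ] {f : α → ℝ}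
    (hf : AEStronglyMeasurable f μ) : ‖∫ x, f x ∂μ‖ₑ ^ 2 ≤ ∫⁻ x, ‖f x‖ₑ ^ 2 ∂μ := by
  rw [← eLpNorm_two_sq]
  gcongr
  calc ‖∫ x, f x ∂μ‖ₑ ≤ eLpNorm f 1 μ := by
        rw [eLpNorm_one_eq_lintegral_enorm]; exact enorm_integral_le_lintegral_enorm f
    _ ≤ eLpNorm f 2 μ := eLpNorm_le_eLpNorm_of_exponent_le one_le_two hf

theorem lintegral_enorm_indicator_sub_measureReal_sq [IsProbabilityMeasure μ] {s : Set α}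
    (hs : MeasurableSet s) :
    ∫⁻ x, ‖s.indicator 1 x - μ.real s‖ₑ ^ 2 ∂μ = μ s * (1 - μ s) := by
  have hin : ∀ x ∈ s, ‖s.indicator (1 : α → ℝ) x - μ.real s‖ₑ ^ 2 = μ sᶜ ^ 2 := by
    intro x hx
    rw [Set.indicator_of_mem hx, Pi.one_apply, ← probReal_compl_eq_one_sub hs,
      Real.enorm_of_nonneg measureReal_nonneg, ofReal_measureReal]
  have hout : ∀ x ∈ sᶜ, ‖s.indicator (1 : α → ℝ) x - μ.real s‖ₑ ^ 2 = μ s ^ 2 := by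
    intro x hx
    rw [Set.indicator_of_notMem hx, zero_sub, enorm_neg,
      Real.enorm_of_nonneg measureReal_nonneg, ofReal_measureReal]
  rw [← lintegral_add_compl _ hs, setLIntegral_congr_fun hs hin,
    setLIntegral_congr_fun hs.compl hout, setLIntegral_const, setLIntegral_const,
    ← prob_compl_eq_one_sub hs]
  calc μ sᶜ ^ 2 * μ s + μ s ^ 2 * μ sᶜ = μ s * μ sᶜ * (μ s + μ sᶜ) := by ring
    _ = μ s * μ sᶜ := by rw [measure_add_measure_compl hs, measure_univ, mul_one]

end Lp

theorem measure_compl_lt_ofReal {α : Type*} [MeasurableSpace α] {m : Measure α}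
    [IsProbabilityMeasure m] {s : Set α} (hs : MeasurableSet s) {δ : ℝ}
    (h : 1 - δ < (m s).toReal) : m sᶜ < ENNReal.ofReal δ := by
  rw [ENNReal.lt_ofReal_iff_toReal_lt (measure_ne_top _ _), ← measureReal_def,
    probReal_compl_eq_one_sub hs, measureReal_def]
  linarith

theorem one_sub_lt_toReal_of_one_sub_ofReal_lt {r s : ℝ} (hr : 0 ≤ r) (hrs : r ≤ s)
    {x : ℝ≥0∞} (hx : x ≠ ⊤) (h : 1 - ENNReal.ofReal r < x) : 1 - s < x.toReal := by
  have hle : 1 - r ≤ (1 - ENNReal.ofReal r).toReal := by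
    rcases le_total r 1 with hr1 | hr1
    · rw [ENNReal.toReal_sub_of_le (ENNReal.ofReal_le_one.2 hr1) ENNReal.one_ne_top,
        ENNReal.toReal_one, ENNReal.toReal_ofReal hr]
    · linarith [ENNReal.toReal_nonneg (a := 1 - ENNReal.ofReal r)]
  linarith [ENNReal.toReal_strict_mono hx h]

theorem measurableEmbedding_smul_of_measurable {G X : Type*} [Group G] [MulAction G X]
    [MeasurableSpace X] (h : ∀ g : G, Measurable fun x : X => g • x) (g : G) :
    MeasurableEmbedding fun x : X => g • x :=
  .of_measurable_inverse (h g) (by rw [(MulAction.surjective g).range_eq]; exact .univ) (h g⁻¹)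
    (inv_smul_smul g)

section CountingProduct
variable {G Z : Type*} [MeasurableSpace G] [MeasurableSingletonClass G]
  [MeasurableSpace Z] {ζ : Measure Z} [SFinite ζ]

theorem lintegral_nuG {F : G × Z → ℝ≥0∞} (hF : Measurable F) :
    ∫⁻ p, F p ∂nuG G ζ = ∑' h, ∫⁻ z, F (h, z) ∂ζ := by
  rw [nuG, lintegral_prod _ hF.aemeasurable, lintegral_count]

theorem lintegral_nuG_eq_lintegral_tsum [Countable G] {F : G × Z → ℝ≥0∞} (hF : Measurable F) :
    ∫⁻ p, F p ∂nuG G ζ = ∫⁻ z, ∑' h, F (h, z) ∂ζ := by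
  rw [nuG, lintegral_prod_symm _ hF.aemeasurable]
  simp_rw [lintegral_count]

end CountingProduct

/-- The representation `π(g)` of the statement. -/
def conjTranslate {G Z : Type*} [Group G] [SMul G Z] (g : G) (φ : G × Z → ℝ) : G × Z → ℝ :=
  fun p => φ (g⁻¹ * p.1 * g, g⁻¹ • p.2)

theorem measurable_conjTranslate {G Z : Type*} [Group G] [SMul G Z] [MeasurableSpace G]
    [DiscreteMeasurableSpace G] [MeasurableSpace Z] {g : G} {φ : G × Z → ℝ} (hφ : Measurable φ)
    (hg : Measurable fun z : Z => g⁻¹ • z) : Measurable (conjTranslate g φ) :=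
  hφ.comp (((Measurable.of_discrete (f := fun h : G => g⁻¹ * h * g)).comp measurable_fst).prodMk
    (hg.comp measurable_snd))

section FiberAverage
variable {G X Y : Type*} [MeasurableSpace X] {μ : Measure X}

variable (μ) in
noncomputable def fiberAvg (φ : G × X × Y → ℝ) : G × X × Y → ℝ :=
  fun p => ∫ x, φ (p.1, x, p.2.2) ∂μ

theorem measurable_fiberAvg [MeasurableSpace G] [MeasurableSpace Y] [SFinite μ]
    {φ : G × X × Y → ℝ} (hφ : Measurable φ) : Measurable (fiberAvg μ φ) := by
  have : StronglyMeasurable fun q : G × Y => ∫ x, φ (q.1, x, q.2) ∂μ :=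
    (hφ.comp (by fun_prop : Measurable fun r : (G × Y) × X => (r.1.1, r.2, r.1.2))
      ).stronglyMeasurable.integral_prod_right'
  exact this.measurable.comp (by fun_prop : Measurable fun p : G × X × Y => (p.1, p.2.2))

theorem fiberAvg_sub {φ ψ : G × X × Y → ℝ} (hφ : ∀ h y, Integrable (fun x => φ (h, x, y)) μ)
    (hψ : ∀ h y, Integrable (fun x => ψ (h, x, y)) μ) :
    fiberAvg μ (φ - ψ) = fiberAvg μ φ - fiberAvg μ ψ := by
  funext p
  exact integral_sub (hφ _ _) (hψ _ _)

theorem integral_sub_fiberAvg [IsProbabilityMeasure μ] {φ : G × X × Y → ℝ} {h : G} {y : Y}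
    (hφ : Integrable (fun x => φ (h, x, y)) μ) :
    ∫ x, (φ - fiberAvg μ φ) (h, x, y) ∂μ = 0 := by
  simp only [Pi.sub_apply, fiberAvg]
  rw [integral_sub hφ (integrable_const _), integral_const, probReal_univ, one_smul, sub_self]

theorem eLpNorm_fiberAvg_le [MeasurableSpace G] [MeasurableSingletonClass G] [MeasurableSpace Y]
    [IsProbabilityMeasure μ] {ν₀ : Measure Y} [SFinite ν₀] {φ : G × X × Y → ℝ}
    (hφ : Measurable φ) :
    eLpNorm (fiberAvg μ φ) 2 (nuG G (μ.prod ν₀)) ≤ eLpNorm φ 2 (nuG G (μ.prod ν₀)) := by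
  have hE := measurable_fiberAvg (μ := μ) hφ
  refine (ENNReal.pow_le_pow_left_iff two_ne_zero).mp ?_
  rw [eLpNorm_two_sq, eLpNorm_two_sq, lintegral_nuG (hE.enorm.pow_const 2),
    lintegral_nuG (hφ.enorm.pow_const 2)]
  refine ENNReal.tsum_le_tsum fun h => ?_
  rw [lintegral_prod_symm (fun z => ‖fiberAvg μ φ (h, z)‖ₑ ^ 2)
      ((hE.comp measurable_prodMk_left).enorm.pow_const 2).aemeasurable,
    lintegral_prod_symm (fun z => ‖φ (h, z)‖ₑ ^ 2)
      ((hφ.comp measurable_prodMk_left).enorm.pow_const 2).aemeasurable]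
  refine lintegral_mono fun y => ?_
  simp only [fiberAvg, lintegral_const, measure_univ, mul_one]
  exact enorm_integral_sq_le
    (hφ.comp (by fun_prop : Measurable fun x : X => (h, x, y))).aestronglyMeasurable

theorem memLp_fiberAvg [MeasurableSpace G] [MeasurableSingletonClass G] [MeasurableSpace Y]
    [IsProbabilityMeasure μ] {ν₀ : Measure Y} [SFinite ν₀] {φ : G × X × Y → ℝ}
    (hφ : Measurable φ) (hφ₂ : MemLp φ 2 (nuG G (μ.prod ν₀))) :
    MemLp (fiberAvg μ φ) 2 (nuG G (μ.prod ν₀)) :=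
  ⟨(measurable_fiberAvg hφ).aestronglyMeasurable, (eLpNorm_fiberAvg_le hφ).trans_lt hφ₂.2⟩

end FiberAverage

section Representation
variable {G X Y : Type*} [Group G] [MeasurableSpace X] [MulAction G X] [MulAction G Y]
  {μ : Measure X}

theorem fiberAvg_conjTranslate (hX : ∀ g : G, MeasurePreserving (fun x : X => g • x) μ μ)
    (g : G) (φ : G × X × Y → ℝ) :
    fiberAvg μ (conjTranslate g φ) = conjTranslate g (fiberAvg μ φ) := by
  funext ⟨h, x, y⟩
  exact (hX g⁻¹).integral_comp
    (measurableEmbedding_smul_of_measurable (fun g => (hX g).measurable) g⁻¹)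
    (fun x' => φ (g⁻¹ * h * g, x', g⁻¹ • y))

theorem eLpNorm_conjTranslate_sub_fiberAvg_le [MeasurableSpace G] [MeasurableSingletonClass G]
    [Countable G] [MeasurableSpace Y] [IsProbabilityMeasure μ] {ν₀ : Measure Y} [SFinite ν₀]
    (hX : ∀ g : G, MeasurePreserving (fun x : X => g • x) μ μ)
    (hY : ∀ g : G, Measurable fun y : Y => g • y) {φ : G × X × Y → ℝ} (hφ : Measurable φ)
    (hφi : ∀ h y, Integrable (fun x => φ (h, x, y)) μ) (g : G) :
    eLpNorm (conjTranslate g (φ - fiberAvg μ φ) - (φ - fiberAvg μ φ)) 2 (nuG G (μ.prod ν₀)) ≤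
      2 * eLpNorm (conjTranslate g φ - φ) 2 (nuG G (μ.prod ν₀)) := by
  set ψ := conjTranslate g φ - φ
  have hπi : ∀ h y, Integrable (fun x => conjTranslate g φ (h, x, y)) μ := fun h y =>
    (hX g⁻¹).integrable_comp_of_integrable (hφi (g⁻¹ * h * g) (g⁻¹ • y))
  have hψ : Measurable ψ :=
    (measurable_conjTranslate hφ ((hX g⁻¹).measurable.prodMap (hY g⁻¹))).sub hφ
  have hcomm : conjTranslate g (φ - fiberAvg μ φ) - (φ - fiberAvg μ φ) = ψ - fiberAvg μ ψ := by
    rw [fiberAvg_sub hπi hφi, fiberAvg_conjTranslate hX]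
    funext p
    simp only [ψ, conjTranslate, Pi.sub_apply]
    ring
  calc _ = eLpNorm (ψ - fiberAvg μ ψ) 2 (nuG G (μ.prod ν₀)) := by rw [hcomm]
    _ ≤ eLpNorm ψ 2 (nuG G (μ.prod ν₀)) + eLpNorm (fiberAvg μ ψ) 2 (nuG G (μ.prod ν₀)) :=
      eLpNorm_sub_le hψ.aestronglyMeasurable (measurable_fiberAvg hψ).aestronglyMeasurable
        one_le_two
    _ ≤ eLpNorm ψ 2 (nuG G (μ.prod ν₀)) + eLpNorm ψ 2 (nuG G (μ.prod ν₀)) := by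
      gcongr; exact eLpNorm_fiberAvg_le hψ
    _ = 2 * eLpNorm ψ 2 (nuG G (μ.prod ν₀)) := (two_mul _).symm

end Representation

section Graph
variable {G Z : Type*}

noncomputable def graphIndicator (f : Z → G) : G × Z → ℝ := {p | f p.2 = p.1}.indicator 1

theorem graphIndicator_apply [DecidableEq G] (f : Z → G) (h : G) (z : Z) :
    graphIndicator f (h, z) = if h = f z then 1 else 0 := by
  simp [graphIndicator, Set.indicator_apply, eq_comm]

theorem conjTranslate_graphIndicator [Group G] [MulAction G Z] (g : G) (f : Z → G) :
    conjTranslate g (graphIndicator f) = graphIndicator fun z => g * f (g⁻¹ • z) * g⁻¹ := by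
  classical
  funext ⟨h, z⟩
  simp only [conjTranslate, graphIndicator_apply]
  congr 1
  rw [mul_assoc, inv_mul_eq_iff_eq_mul, ← eq_mul_inv_iff_mul_eq]

theorem tsum_enorm_graphIndicator_sq (f : Z → G) (z : Z) :
    ∑' h, ‖graphIndicator f (h, z)‖ₑ ^ 2 = 1 := by
  classical
  simp [graphIndicator_apply, apply_ite]

theorem tsum_enorm_graphIndicator_sub_sq (f₁ f₂ : Z → G) (z : Z) :
    ∑' h, ‖(graphIndicator f₁ - graphIndicator f₂) (h, z)‖ₑ ^ 2 =
      {z | f₁ z ≠ f₂ z}.indicator 2 z := by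
  classical
  by_cases hz : f₁ z = f₂ z
  · simp [graphIndicator_apply, hz]
  have hsplit : ∀ h, ‖(graphIndicator f₁ - graphIndicator f₂) (h, z)‖ₑ ^ 2 =
      (if h = f₁ z then 1 else 0) + if h = f₂ z then 1 else 0 := by
    intro h
    by_cases h₁ : h = f₁ z <;> by_cases h₂ : h = f₂ z <;> simp_all [graphIndicator_apply]
  rw [tsum_congr hsplit, ENNReal.tsum_add, tsum_ite_eq, tsum_ite_eq, Set.indicator_of_mem hz]
  simp [one_add_one_eq_two]

variable [MeasurableSpace G] [MeasurableSingletonClass G] [Countable G] [MeasurableSpace Z]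

theorem measurable_graphIndicator {f : Z → G} (hf : Measurable f) :
    Measurable (graphIndicator f) :=
  measurable_one.indicator (measurableSet_eq_fun (hf.comp measurable_snd) measurable_fst)

variable {ζ : Measure Z} [SFinite ζ]

theorem eLpNorm_graphIndicator_sq {f : Z → G} (hf : Measurable f) :
    eLpNorm (graphIndicator f) 2 (nuG G ζ) ^ 2 = ζ Set.univ := by
  simp [eLpNorm_two_sq, tsum_enorm_graphIndicator_sq,
    lintegral_nuG_eq_lintegral_tsum ((measurable_graphIndicator hf).enorm.pow_const 2)]

theorem memLp_graphIndicator [IsFiniteMeasure ζ] {f : Z → G} (hf : Measurable f) :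
    MemLp (graphIndicator f) 2 (nuG G ζ) := by
  refine ⟨(measurable_graphIndicator hf).aestronglyMeasurable, ?_⟩
  have := measure_lt_top ζ Set.univ
  rw [← eLpNorm_graphIndicator_sq hf] at this
  simpa using this

theorem eLpNorm_graphIndicator_sub_sq {f₁ f₂ : Z → G} (hf₁ : Measurable f₁)
    (hf₂ : Measurable f₂) :
    eLpNorm (graphIndicator f₁ - graphIndicator f₂) 2 (nuG G ζ) ^ 2 =
      2 * ζ {z | f₁ z ≠ f₂ z} := by
  rw [eLpNorm_two_sq, lintegral_nuG_eq_lintegral_tsum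
    (((measurable_graphIndicator hf₁).sub (measurable_graphIndicator hf₂)).enorm.pow_const 2)]
  simp_rw [tsum_enorm_graphIndicator_sub_sq]
  exact lintegral_indicator_const (measurableSet_eq_fun hf₁ hf₂).compl 2

end Graph

noncomputable def giniImpurity {ι : Type*} (a : ι → ℝ≥0∞) : ℝ≥0∞ := ∑' i, a i * (1 - a i)

theorem one_sub_le_giniImpurity {ι : Type*} {a : ι → ℝ≥0∞} (hsum : ∑' i, a i = 1) {b : ℝ≥0∞}
    (hb : ∀ i, a i ≤ b) : 1 - b ≤ giniImpurity a :=
  calc 1 - b = ∑' i, a i * (1 - b) := by rw [ENNReal.tsum_mul_right, hsum, one_mul]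
    _ ≤ giniImpurity a := ENNReal.tsum_le_tsum fun i => by gcongr; exact hb i

theorem pairwise_disjoint_setOf_lt {ι Y : Type*} {a : ι → Y → ℝ≥0∞}
    (hsum : ∀ y, ∑' i, a i y ≤ 1) {b : ℝ≥0∞} (hb : 2⁻¹ ≤ b) :
    Pairwise fun i j => Disjoint {y | b < a i y} {y | b < a j y} := by
  classical
  intro i j hij
  refine Set.disjoint_left.mpr fun y hi hj => ?_
  have hle : a i y + a j y ≤ 1 := by
    rw [← Finset.sum_pair (f := fun k => a k y) hij]
    exact (ENNReal.sum_le_tsum _).trans (hsum y)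
  have hlt : 1 < a i y + a j y :=
    calc 1 = 2⁻¹ + 2⁻¹ := ENNReal.inv_two_add_inv_two.symm
      _ ≤ b + b := add_le_add hb hb
      _ < a i y + a j y := ENNReal.add_lt_add hi hj
  exact hlt.not_ge hle

theorem exists_injective_fin_lt_measure_iUnion {ι Y : Type*} [Countable ι] [MeasurableSpace Y]
    (ν : Measure Y) (Z : ι → Set Y) {c : ℝ≥0∞} (hc : c < ν (⋃ i, Z i)) :
    ∃ (m : ℕ) (e : Fin m → ι), Function.Injective e ∧ c < ν (⋃ j, Z (e j)) := by
  have hmono : Monotone fun F : Finset ι => ⋃ i ∈ F, Z i := fun _ _ hF =>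
    Set.biUnion_subset_biUnion_left hF
  rw [Set.iUnion_eq_iUnion_finset, hmono.directed_le.measure_iUnion] at hc
  obtain ⟨F, hF⟩ := lt_iSup_iff.mp hc
  refine ⟨F.card, fun j => F.equivFin.symm j,
    Subtype.val_injective.comp F.equivFin.symm.injective, ?_⟩
  rwa [F.equivFin.symm.surjective.iUnion_comp (fun i : F => Z i), Set.iUnion_subtype (· ∈ F)]

theorem exists_fin_partition_of_lintegral_giniImpurity_lt {ι Y : Type*} [Countable ι]
    [MeasurableSpace Y] {ν : Measure Y} [IsProbabilityMeasure ν] {a : ι → Y → ℝ≥0∞}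
    (ha : ∀ i, Measurable (a i)) (hsum : ∀ y, ∑' i, a i y = 1) {t : ℝ≥0∞} (ht : t ≤ 2⁻¹)
    (hgini : ∫⁻ y, giniImpurity (fun i => a i y) ∂ν < t ^ 2) :
    ∃ (m : ℕ) (Ys : Fin m → Set Y) (is : Fin m → ι), (∀ j, MeasurableSet (Ys j)) ∧
      Pairwise (fun j k => Disjoint (Ys j) (Ys k)) ∧ 1 - t < ν (⋃ j, Ys j) ∧
      ∀ j, ∀ y ∈ Ys j, 1 - t < a (is j) y := by
  set Z : ι → Set Y := fun i => {y | 1 - t < a i y}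
  have hgm : Measurable fun y => giniImpurity fun i => a i y :=
    Measurable.tsum fun i => (ha i).mul (measurable_const.sub (ha i))
  have ht0 : t ≠ 0 := by rintro rfl; simp at hgini
  have ht1 : t ≤ 1 := ht.trans (by norm_num)
  have hbad : ν {y | t ≤ giniImpurity fun i => a i y} < t := by
    refine (ENNReal.mul_lt_mul_iff_right ht0 (ne_top_of_le_ne_top ENNReal.one_ne_top ht1)).mp ?_
    calc t * ν {y | t ≤ giniImpurity fun i => a i y}
        ≤ ∫⁻ y, giniImpurity (fun i => a i y) ∂ν := mul_meas_ge_le_lintegral₀ hgm.aemeasurable t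
      _ < t * t := by rwa [← sq]
  have hgood : 1 - t < ν {y | giniImpurity (fun i => a i y) < t} := by
    have : {y | giniImpurity (fun i => a i y) < t} = {y | t ≤ giniImpurity fun i => a i y}ᶜ := by
      ext y; simp
    rw [this, prob_compl_eq_one_sub (measurableSet_le measurable_const hgm)]
    exact (ENNReal.cancel_of_ne (ENNReal.sub_ne_top ENNReal.one_ne_top)).tsub_lt_tsub_left_of_le
      ht1 hbad
  have hcover : {y | giniImpurity (fun i => a i y) < t} ⊆ ⋃ i, Z i := by
    intro y hy
    by_contra hcon
    simp only [Set.mem_iUnion, not_exists, not_lt, Z, Set.mem_ofPred_eq] at hcon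
    have := one_sub_le_giniImpurity (hsum y) hcon
    rw [ENNReal.sub_sub_cancel ENNReal.one_ne_top ht1] at this
    exact hy.not_ge this
  have hhalf : 2⁻¹ ≤ 1 - t := ENNReal.one_sub_inv_two ▸ tsub_le_tsub_left ht 1
  obtain ⟨m, e, he, hlt⟩ :=
    exists_injective_fin_lt_measure_iUnion ν Z (hgood.trans_le (measure_mono hcover))
  exact ⟨m, Z ∘ e, e, fun j => measurableSet_lt measurable_const (ha _),
    (pairwise_disjoint_setOf_lt (fun y => (hsum y).le) hhalf).comp_of_injective he, hlt,
    fun j y hy => hy⟩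

theorem graphIndicator_mk_mk {G X Y : Type*} (f : X × Y → G) (h : G) (x : X) (y : Y) :
    graphIndicator f (h, x, y) = {x' | f (x', y) = h}.indicator 1 x := by
  classical
  simp [graphIndicator_apply, Set.indicator_apply, eq_comm]

section GraphFibers
variable {G X Y : Type*} [MeasurableSpace G] [MeasurableSingletonClass G]
  [MeasurableSpace X] [MeasurableSpace Y] {μ : Measure X} {f : X × Y → G}

theorem measurableSet_fiber (hf : Measurable f) (h : G) (y : Y) :
    MeasurableSet {x | f (x, y) = h} :=
  hf (measurableSet_singleton h) |>.preimage measurable_prodMk_right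

theorem integrable_graphIndicator_fiber [IsFiniteMeasure μ] (hf : Measurable f) (h : G) (y : Y) :
    Integrable (fun x => graphIndicator f (h, x, y)) μ := by
  simp_rw [graphIndicator_mk_mk]
  exact (integrable_const 1).indicator (measurableSet_fiber hf h y)

theorem fiberAvg_graphIndicator (hf : Measurable f) (h : G) (x : X) (y : Y) :
    fiberAvg μ (graphIndicator f) (h, x, y) = μ.real {x' | f (x', y) = h} := by
  simp only [fiberAvg, graphIndicator_mk_mk]
  exact integral_indicator_one (measurableSet_fiber hf h y)

theorem tsum_measure_fiber [Countable G] (hf : Measurable f) (y : Y) :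
    ∑' h, μ {x | f (x, y) = h} = μ Set.univ := by
  have hdisj : Pairwise fun h h' => Disjoint {x | f (x, y) = h} {x | f (x, y) = h'} :=
    fun h h' hne => Set.disjoint_left.mpr fun x hx hx' => hne (hx.symm.trans hx')
  rw [← measure_iUnion hdisj (measurableSet_fiber hf · y)]
  congr
  ext x
  simp

theorem eLpNorm_graphIndicator_sub_fiberAvg_sq [Countable G] [IsProbabilityMeasure μ]
    {ν₀ : Measure Y} [SFinite ν₀] (hf : Measurable f) :
    eLpNorm (graphIndicator f - fiberAvg μ (graphIndicator f)) 2 (nuG G (μ.prod ν₀)) ^ 2 =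
      ∫⁻ y, giniImpurity (fun h => μ {x | f (x, y) = h}) ∂ν₀ := by
  have hξ := measurable_graphIndicator hf
  have hζ := (hξ.sub (measurable_fiberAvg (μ := μ) hξ)).enorm.pow_const 2
  have hmass : ∀ h, Measurable fun y => μ {x | f (x, y) = h} := fun h =>
    measurable_measure_prodMk_right (hf (measurableSet_singleton h))
  simp only [giniImpurity]
  rw [eLpNorm_two_sq, lintegral_nuG hζ, lintegral_tsum
    (f := fun h y => μ {x | f (x, y) = h} * (1 - μ {x | f (x, y) = h}))
    fun h => ((hmass h).mul (measurable_const.sub (hmass h))).aemeasurable]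
  refine tsum_congr fun h => ?_
  rw [lintegral_prod_symm
    (fun z => ‖(graphIndicator f - fiberAvg μ (graphIndicator f)) (h, z)‖ₑ ^ 2)
    (hζ.comp measurable_prodMk_left).aemeasurable]
  refine lintegral_congr fun y => ?_
  simp only [Pi.sub_apply, graphIndicator_mk_mk, fiberAvg_graphIndicator hf]
  exact lintegral_enorm_indicator_sub_measureReal_sq (measurableSet_fiber hf h y)

end GraphFibers

theorem sq_mul_lintegral_giniImpurity_le {G X Y : Type*} [Group G] [Countable G]
    [MeasurableSpace G] [MeasurableSingletonClass G] [MeasurableSpace X] [MeasurableSpace Y]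
    {μ : Measure X} [IsProbabilityMeasure μ] {ν₀ : Measure Y} [SFinite ν₀]
    [MulAction G X] [MulAction G Y]
    (hX : ∀ g : G, MeasurePreserving (fun x : X => g • x) μ μ)
    (hY : ∀ g : G, MeasurePreserving (fun y : Y => g • y) ν₀ ν₀)
    {f : X × Y → G} (hf : Measurable f) {g : G} {K : ℝ≥0∞}
    (hK : K * eLpNorm (graphIndicator f - fiberAvg μ (graphIndicator f)) 2 (nuG G (μ.prod ν₀)) ≤
      eLpNorm (conjTranslate g (graphIndicator f - fiberAvg μ (graphIndicator f)) -
        (graphIndicator f - fiberAvg μ (graphIndicator f))) 2 (nuG G (μ.prod ν₀))) :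
    K ^ 2 * ∫⁻ y, giniImpurity (fun h => μ {x | f (x, y) = h}) ∂ν₀ ≤
      8 * (μ.prod ν₀) {z | f (g • z) ≠ g * f z * g⁻¹} := by
  have hσ : ∀ k : G, MeasurePreserving (fun z : X × Y => k • z) (μ.prod ν₀) (μ.prod ν₀) :=
    fun k => (hX k).prod (hY k)
  have hu : Measurable fun z => g * f (g⁻¹ • z) * g⁻¹ :=
    (Measurable.of_discrete (f := fun c : G => g * c * g⁻¹)).comp (hf.comp (hσ g⁻¹).measurable)
  have hconj : {z | f (g • z) ≠ g * f z * g⁻¹} =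
      (fun z => g • z) ⁻¹' {z | g * f (g⁻¹ • z) * g⁻¹ ≠ f z} := by
    ext z
    simp [ne_comm]
  calc K ^ 2 * ∫⁻ y, giniImpurity (fun h => μ {x | f (x, y) = h}) ∂ν₀
      = (K * eLpNorm (graphIndicator f - fiberAvg μ (graphIndicator f)) 2
          (nuG G (μ.prod ν₀))) ^ 2 := by
        rw [mul_pow, eLpNorm_graphIndicator_sub_fiberAvg_sq hf]
    _ ≤ (2 * eLpNorm (conjTranslate g (graphIndicator f) - graphIndicator f) 2
          (nuG G (μ.prod ν₀))) ^ 2 := by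
        refine pow_le_pow_left' (hK.trans ?_) 2
        exact eLpNorm_conjTranslate_sub_fiberAvg_le hX (fun k => (hY k).measurable)
          (measurable_graphIndicator hf) (integrable_graphIndicator_fiber hf) g
    _ = 8 * (μ.prod ν₀) {z | g * f (g⁻¹ • z) * g⁻¹ ≠ f z} := by
        rw [mul_pow, conjTranslate_graphIndicator, eLpNorm_graphIndicator_sub_sq hu hf, ← mul_assoc]
        norm_num
    _ = 8 * (μ.prod ν₀) {z | f (g • z) ≠ g * f z * g⁻¹} := by
        rw [hconj, (hσ g).measure_preimage (s := {z | g * f (g⁻¹ • z) * g⁻¹ ≠ f z})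
          (measurableSet_eq_fun hu hf).compl.nullMeasurableSet]

theorem almost_constant_fibers_of_stable_spectral_gap_general
    {G : Type*} [Group G] [Countable G] [MeasurableSpace G] [MeasurableSingletonClass G]
    {X Y : Type*} [MeasurableSpace X]
    [MeasurableSpace Y]
    (μ : Measure X) [IsProbabilityMeasure μ] (ν₀ : Measure Y) [IsProbabilityMeasure ν₀]
    [MulAction G X] [MulAction G Y]
    (hmpX : ∀ g : G, MeasurePreserving (fun x : X => g • x) μ μ)
    (hmpY : ∀ g : G, MeasurePreserving (fun y : Y => g • y) ν₀ ν₀)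
    (S₀ : Finset G) (κ : ℝ) (hκ : 0 < κ)
    (hgap : ∀ ξ : G × X × Y → ℝ, MemLp ξ 2 (nuG G (μ.prod ν₀)) →
      (∀ h : G, ∀ᵐ y ∂ν₀, ∫ x, ξ (h, x, y) ∂μ = 0) →
      ∃ g ∈ S₀, ENNReal.ofReal κ * eLpNorm ξ 2 (nuG G (μ.prod ν₀)) ≤
        eLpNorm (fun p : G × X × Y => ξ (g⁻¹ * p.1 * g, g⁻¹ • p.2) - ξ p) 2
          (nuG G (μ.prod ν₀)))
    (ε : ℝ) (hε : 0 < ε) :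
    ∃ (S : Finset G) (δ : ℝ), 0 < δ ∧
      ∀ f : X × Y → G, Measurable f →
        (∀ g ∈ S, 1 - δ < ((μ.prod ν₀) {z : X × Y | f (g • z) = g * f z * g⁻¹}).toReal) →
        ∃ (Y' : Set Y) (m : ℕ) (Ys : Fin m → Set Y) (gs : Fin m → G),
          MeasurableSet Y' ∧ (∀ i, MeasurableSet (Ys i)) ∧
          (Pairwise fun i j => Disjoint (Ys i) (Ys j)) ∧
          (⋃ i, Ys i) = Y' ∧
          1 - ε < (ν₀ Y').toReal ∧
          ∀ i, ∀ᵐ y ∂ν₀, y ∈ Ys i →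
            1 - ε < (μ {x : X | f (x, y) = gs i}).toReal := by
  set t := min ε 2⁻¹
  have ht : 0 < t := lt_min hε (by norm_num)
  -- `δ` is chosen so that `κ² ∫ gini ≤ 8 μ⊗ν₀ {f ∘ g ≠ g f g⁻¹} < 8 δ = κ² t²`.
  refine ⟨S₀, κ ^ 2 * t ^ 2 / 8, by positivity, fun f hf hcomm => ?_⟩
  have hξ := measurable_graphIndicator (G := G) hf
  obtain ⟨g, hgS, hg⟩ := hgap (graphIndicator f - fiberAvg μ (graphIndicator f))
    ((memLp_graphIndicator hf).sub (memLp_fiberAvg hξ (memLp_graphIndicator hf)))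
    fun h => ae_of_all _ fun y => integral_sub_fiberAvg (integrable_graphIndicator_fiber hf h y)
  have hbad : (μ.prod ν₀) {z | f (g • z) ≠ g * f z * g⁻¹} < ENNReal.ofReal (κ ^ 2 * t ^ 2 / 8) :=
    measure_compl_lt_ofReal (measurableSet_eq_fun (hf.comp ((hmpX g).prod (hmpY g)).measurable)
      ((Measurable.of_discrete (f := fun c : G => g * c * g⁻¹)).comp hf)) (hcomm g hgS)
  have hgini : ∫⁻ y, giniImpurity (fun h => μ {x | f (x, y) = h}) ∂ν₀ < ENNReal.ofReal t ^ 2 := by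
    have hK : ENNReal.ofReal κ ^ 2 ≠ 0 := by simp [hκ]
    refine (ENNReal.mul_lt_mul_iff_right hK (by simp)).mp ?_
    calc _ ≤ 8 * (μ.prod ν₀) {z | f (g • z) ≠ g * f z * g⁻¹} :=
          sq_mul_lintegral_giniImpurity_le hmpX hmpY hf hg
      _ < 8 * ENNReal.ofReal (κ ^ 2 * t ^ 2 / 8) :=
          (ENNReal.mul_lt_mul_iff_right (by simp) (by simp)).mpr hbad
      _ = ENNReal.ofReal κ ^ 2 * ENNReal.ofReal t ^ 2 := by
          rw [← ENNReal.ofReal_pow hκ.le, ← ENNReal.ofReal_pow ht.le, ← ENNReal.ofReal_mul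
            (by positivity), ← ENNReal.ofReal_ofNat 8, ← ENNReal.ofReal_mul (by norm_num)]
          ring_nf
  obtain ⟨m, Ys, gs, hYs, hdisj, hY', hgs⟩ := exists_fin_partition_of_lintegral_giniImpurity_lt
    (fun h => measurable_measure_prodMk_right (hf (measurableSet_singleton h)))
    (fun y => (tsum_measure_fiber hf y).trans measure_univ)
    (by simp [t]) hgini
  exact ⟨⋃ i, Ys i, m, Ys, gs, .iUnion hYs, hYs, hdisj, rfl,
    one_sub_lt_toReal_of_one_sub_ofReal_lt ht.le (min_le_left _ _) (measure_ne_top _ _) hY',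
    fun i => ae_of_all _ fun y hy => one_sub_lt_toReal_of_one_sub_ofReal_lt ht.le
      (min_le_left _ _) (measure_ne_top _ _) (hgs i y hy)⟩

/-- Let `G` be a countable group with measure-preserving actions on standard Borel
probability spaces `(X, μ)` and `(Y, ν₀)`, acting diagonally on `X × Y`.  Assume the
representation `(π(g)ξ)(h, x, y) = ξ(g⁻¹ h g, g⁻¹ • x, g⁻¹ • y)` on `L²(G × X × Y, ν)` has
spectral gap relative to the subspace of `ξ` with `∫_X ξ(h, x, y) dμ(x) = 0` for all `h`
and almost every `y`.  Then for every `ε > 0` there are a finite `S ⊆ G` and `δ > 0` such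
that every measurable `f : X × Y → G` which `δ`-almost commutes with every `g ∈ S`
(i.e. `(μ ⊗ ν₀) {z | f (g • z) = g * f z * g⁻¹} > 1 - δ`) is, over a set `Y' ⊆ Y` of
measure `> 1 - ε` partitioned into finitely many pieces `Y i`, within `ε` of the constant
`g i` in the `X`-direction over each piece. -/
theorem almost_constant_fibers_of_stable_spectral_gap
    {G : Type*} [Group G] [Countable G] [MeasurableSpace G] [MeasurableSingletonClass G]
    {X Y : Type*} [MeasurableSpace X] [StandardBorelSpace X]
    [MeasurableSpace Y] [StandardBorelSpace Y]
    (μ : Measure X) [IsProbabilityMeasure μ] (ν₀ : Measure Y) [IsProbabilityMeasure ν₀]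
    [MulAction G X] [MulAction G Y]
    (hmpX : ∀ g : G, MeasurePreserving (fun x : X => g • x) μ μ)
    (hmpY : ∀ g : G, MeasurePreserving (fun y : Y => g • y) ν₀ ν₀)
    (S₀ : Finset G) (κ : ℝ) (hκ : 0 < κ)
    (hgap : ∀ ξ : G × X × Y → ℝ, MemLp ξ 2 (nuG G (μ.prod ν₀)) →
      (∀ h : G, ∀ᵐ y ∂ν₀, ∫ x, ξ (h, x, y) ∂μ = 0) →
      ∃ g ∈ S₀, ENNReal.ofReal κ * eLpNorm ξ 2 (nuG G (μ.prod ν₀)) ≤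
        eLpNorm (fun p : G × X × Y => ξ (g⁻¹ * p.1 * g, g⁻¹ • p.2) - ξ p) 2
          (nuG G (μ.prod ν₀)))
    (ε : ℝ) (hε : 0 < ε) :
    ∃ (S : Finset G) (δ : ℝ), 0 < δ ∧
      ∀ f : X × Y → G, Measurable f →
        (∀ g ∈ S, 1 - δ < ((μ.prod ν₀) {z : X × Y | f (g • z) = g * f z * g⁻¹}).toReal) →
        ∃ (Y' : Set Y) (m : ℕ) (Ys : Fin m → Set Y) (gs : Fin m → G),
          MeasurableSet Y' ∧ (∀ i, MeasurableSet (Ys i)) ∧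
          (Pairwise fun i j => Disjoint (Ys i) (Ys j)) ∧
          (⋃ i, Ys i) = Y' ∧
          1 - ε < (ν₀ Y').toReal ∧
          ∀ i, ∀ᵐ y ∂ν₀, y ∈ Ys i →
            1 - ε < (μ {x : X | f (x, y) = gs i}).toReal :=
  almost_constant_fibers_of_stable_spectral_gap_general μ ν₀ hmpX hmpY S₀ κ hκ hgap ε hε
end

section
/- Let H be the subgroup of SL(5, ℤ) consisting of all matrices A with A₀₀ = 1, A₄₄ = 1, A_{i0} = 0 for every i ≠ 0, and A_{4j} = 0 for every j ≠ 4 (indices in {0,1,2,3,4}; equivalently, A has block form [[1, *, *], [0, h, *], [0, 0, 1]] with h ∈ SL(3, ℤ)), and let C be the set of A ∈ H which agree with the identity matrix except possibly in the (0,4) entry. Then for every g ∈ H, if the centralizer {h ∈ H : hg = gh} has finite index in H, then g ∈ C; in particular, every element of H not in C has infinite conjugacy class in H. -/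
/-- Let `H` be the subgroup of `SL(5, ℤ)` of matrices of block form
`[[1, *, *], [0, h, *], [0, 0, 1]]` with `h ∈ SL(3, ℤ)` (i.e. `A 0 0 = 1`, `A 4 4 = 1`,
the rest of column `0` vanishes and the rest of row `4` vanishes), and let `C ⊆ H` be the
set of matrices agreeing with the identity except possibly in the `(0, 4)` entry.  If the
centralizer in `H` of an element `g ∈ H` has finite index in `H`, then `g ∈ C`; in
particular, every element of `H` outside of `C` has infinite conjugacy class in `H`. -/
theorem mem_center_entries_of_finiteIndex_centralizer_SL5
    (H : Subgroup (Matrix.SpecialLinearGroup (Fin 5) ℤ))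
    (hH : ∀ A : Matrix.SpecialLinearGroup (Fin 5) ℤ, A ∈ H ↔
      ((A : Matrix (Fin 5) (Fin 5) ℤ) 0 0 = 1 ∧
        (A : Matrix (Fin 5) (Fin 5) ℤ) 4 4 = 1 ∧
        (∀ i : Fin 5, i ≠ 0 → (A : Matrix (Fin 5) (Fin 5) ℤ) i 0 = 0) ∧
        (∀ j : Fin 5, j ≠ 4 → (A : Matrix (Fin 5) (Fin 5) ℤ) 4 j = 0)))
    (g : Matrix.SpecialLinearGroup (Fin 5) ℤ) (hg : g ∈ H)
    (hfin : (Subgroup.centralizer ({⟨g, hg⟩} : Set H)).FiniteIndex) :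
    ∀ i j : Fin 5, ¬(i = 0 ∧ j = 4) →
      (g : Matrix (Fin 5) (Fin 5) ℤ) i j = (1 : Matrix (Fin 5) (Fin 5) ℤ) i j := by
  set Z := Subgroup.centralizer ({⟨g, hg⟩} : Set H) with hZ
  set gM : Matrix (Fin 5) (Fin 5) ℤ := (g : Matrix (Fin 5) (Fin 5) ℤ) with hgM
  -- key step: for each admissible transvection, g commutes with some nonzero power of it
  have key : ∀ i j : Fin 5, i ≠ j → j ≠ 0 → i ≠ 4 →
      (∀ b, b ≠ j → gM j b = 0) ∧ (∀ a, a ≠ i → gM a i = 0) ∧ gM i i = gM j j := by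
    intro i j hij hj0 hi4
    -- entries of a transvection
    have hT : ∀ (c : ℤ) (k l : Fin 5), Matrix.transvection i j c k l =
        (if k = l then (1 : ℤ) else 0) + (if i = k ∧ j = l then c else 0) := by
      intro c k l
      simp [Matrix.transvection, Matrix.add_apply, Matrix.one_apply, Matrix.single]
    -- the transvection with parameter 1 as an element of SL(5, ℤ)
    set T : Matrix.SpecialLinearGroup (Fin 5) ℤ :=
      ⟨Matrix.transvection i j 1, by simp [Matrix.det_transvection_of_ne i j hij]⟩ with hTdef
    have hTH : T ∈ H := by
      rw [hH]
      refine ⟨?_, ?_, ?_, ?_⟩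
      · rw [show (T : Matrix (Fin 5) (Fin 5) ℤ) = Matrix.transvection i j 1 from rfl, hT]
        have : ¬(i = 0 ∧ j = 0) := by rintro ⟨h1, h2⟩; exact hj0 h2
        simp [this]
      · rw [show (T : Matrix (Fin 5) (Fin 5) ℤ) = Matrix.transvection i j 1 from rfl, hT]
        have : ¬(i = 4 ∧ j = 4) := by rintro ⟨h1, h2⟩; exact hi4 h1
        simp [this]
      · intro k hk
        rw [show (T : Matrix (Fin 5) (Fin 5) ℤ) = Matrix.transvection i j 1 from rfl, hT]
        have : ¬(i = k ∧ j = 0) := by rintro ⟨h1, h2⟩; exact hj0 h2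
        simp [hk, Ne.symm hk, this]
      · intro l hl
        rw [show (T : Matrix (Fin 5) (Fin 5) ℤ) = Matrix.transvection i j 1 from rfl, hT]
        have : ¬(i = 4 ∧ j = l) := by rintro ⟨h1, h2⟩; exact hi4 h1
        simp [hl, Ne.symm hl, this]
    -- powers of the transvection
    have hpow : ∀ n : ℕ, (Matrix.transvection i j (1 : ℤ)) ^ n =
        Matrix.transvection i j (n : ℤ) := by
      intro n
      induction n with
      | zero => simp
      | succ n ih =>
        rw [pow_succ, ih, Matrix.transvection_mul_transvection_same _ _ hij]
        push_cast
        ring_nf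
    -- some positive power of T lies in the centralizer
    obtain ⟨n, hn0, -, hnZ⟩ :=
      Subgroup.exists_pow_mem_of_index_ne_zero (H := Z) hfin.index_ne_zero
        (⟨T, hTH⟩ : H)
    have hcomm : gM * Matrix.transvection i j (n : ℤ) =
        Matrix.transvection i j (n : ℤ) * gM := by
      rw [hZ, Subgroup.mem_centralizer_iff] at hnZ
      have := hnZ ⟨g, hg⟩ (Set.mem_singleton _)
      have h2 : (((⟨g, hg⟩ : H) * (⟨T, hTH⟩ : H) ^ n : H) : Matrix.SpecialLinearGroup (Fin 5) ℤ)
          = (((⟨T, hTH⟩ : H) ^ n * (⟨g, hg⟩ : H) : H) : Matrix.SpecialLinearGroup (Fin 5) ℤ) := by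
        rw [this]
      have h3 : g * T ^ n = T ^ n * g := by
        simpa using h2
      have h4 : (g : Matrix (Fin 5) (Fin 5) ℤ) * (T : Matrix (Fin 5) (Fin 5) ℤ) ^ n
          = (T : Matrix (Fin 5) (Fin 5) ℤ) ^ n * (g : Matrix (Fin 5) (Fin 5) ℤ) := by
        have := congrArg (fun A : Matrix.SpecialLinearGroup (Fin 5) ℤ =>
          (A : Matrix (Fin 5) (Fin 5) ℤ)) h3
        simpa [Matrix.SpecialLinearGroup.coe_mul, Matrix.SpecialLinearGroup.coe_pow] using this
      rw [show (T : Matrix (Fin 5) (Fin 5) ℤ) = Matrix.transvection i j 1 from rfl, hpow] at h4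
      exact h4
    have hne : (n : ℤ) ≠ 0 := by exact_mod_cast hn0.ne'
    refine ⟨?_, ?_, ?_⟩
    · intro b hb
      have e1 : (Matrix.transvection i j (n : ℤ) * gM) i b = gM i b + (n : ℤ) * gM j b :=
        Matrix.transvection_mul_apply_same i j b _ gM
      have e2 : (gM * Matrix.transvection i j (n : ℤ)) i b = gM i b :=
        Matrix.mul_transvection_apply_of_ne i j i b hb _ gM
      have := congrFun (congrFun hcomm i) b
      rw [e1, e2] at this
      have : (n : ℤ) * gM j b = 0 := by linarith
      exact (mul_eq_zero.1 this).resolve_left hne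
    · intro a ha
      have e1 : (gM * Matrix.transvection i j (n : ℤ)) a j = gM a j + (n : ℤ) * gM a i :=
        Matrix.mul_transvection_apply_same i j a _ gM
      have e2 : (Matrix.transvection i j (n : ℤ) * gM) a j = gM a j :=
        Matrix.transvection_mul_apply_of_ne i j a j ha _ gM
      have := congrFun (congrFun hcomm a) j
      rw [e1, e2] at this
      have : (n : ℤ) * gM a i = 0 := by linarith
      exact (mul_eq_zero.1 this).resolve_left hne
    · have e1 : (Matrix.transvection i j (n : ℤ) * gM) i j = gM i j + (n : ℤ) * gM j j :=
        Matrix.transvection_mul_apply_same i j j _ gM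
      have e2 : (gM * Matrix.transvection i j (n : ℤ)) i j = gM i j + (n : ℤ) * gM i i :=
        Matrix.mul_transvection_apply_same i j i _ gM
      have := congrFun (congrFun hcomm i) j
      rw [e1, e2] at this
      have h5 : (n : ℤ) * gM i i = (n : ℤ) * gM j j := by linarith
      exact mul_left_cancel₀ hne h5
    -- now assemble
  obtain ⟨h00, h44, hcol0, hrow4⟩ := (hH g).1 hg
  obtain ⟨row1, col2, d12⟩ := key 1 2 (by decide) (by decide) (by decide)
  obtain ⟨row2, col3, d23⟩ := key 2 3 (by decide) (by decide) (by decide)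
  obtain ⟨row3, col1, d31⟩ := key 3 1 (by decide) (by decide) (by decide)
  obtain ⟨row0aux, col1', d01⟩ := key 0 1 (by decide) (by decide) (by decide)
  -- row1 : ∀ b ≠ 2, gM 2 b = 0 ; col2 : ∀ a ≠ 1, gM a 1 = 0 ; d12 : gM 1 1 = gM 2 2
  -- row2 : gM 3 b = 0 ; col3 : gM a 2 = 0 ; row3 : gM 1 b = 0 ; col1 : gM a 3 = 0
  -- row0aux : gM 1 b = 0 ; d01 : gM 0 0 = gM 1 1
  have h11 : gM 1 1 = 1 := by rw [← d01]; exact h00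
  have h22 : gM 2 2 = 1 := by rw [← d12, h11]
  have h33 : gM 3 3 = 1 := by rw [← d23, h22]
  have hdiag : ∀ k : Fin 5, gM k k = 1 := by
    intro k
    fin_cases k
    · exact h00
    · exact h11
    · exact h22
    · exact h33
    · exact h44
  intro i j hij
  by_cases h : i = j
  · subst h
    rw [Matrix.one_apply_eq]
    exact hdiag i
  · rw [Matrix.one_apply_ne h]
    fin_cases i <;> fin_cases j <;>
      first
        | exact absurd rfl h
        | exact absurd ⟨by decide, by decide⟩ hij
        | exact hcol0 _ (by decide)
        | exact hrow4 _ (by decide)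
        | exact row1 _ (by decide)
        | exact row2 _ (by decide)
        | exact row3 _ (by decide)
        | exact col1 _ (by decide)
        | exact col2 _ (by decide)
        | exact col3 _ (by decide)
end

section
/- Let H be the subgroup of GL(5, ℤ) consisting of all matrices A with determinant 1, A₀₀ = 1, A₄₄ = 1, A_{i0} = 0 for every i ≠ 0, and A_{4j} = 0 for every j ≠ 4 (indices in {0,1,2,3,4}), and let u ∈ GL(5, ℤ) be the diagonal matrix diag(−1, 1, 1, 1, 1). Then for every g ∈ H, the centralizer {h ∈ H : h(gu) = (gu)h} has infinite index in H; in particular, the conjugacy class of gu in the subgroup generated by H and u is infinite. -/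
/-!
The transvection `t = 1 + E₀₄` lies in `H`, and its powers `tⁿ = 1 + n E₀₄` satisfy
`(tⁿ M)₀₄ - (M tⁿ)₀₄ = n (M₄₄ - M₀₀)`. For `M = g u` we have `M₀₀ = -1` and `M₄₄ = 1`, so no
positive power of `t` centralizes `g u`; a subgroup of finite index would contain one.
-/

namespace Matrix

variable {n R : Type*} [DecidableEq n] [Fintype n] [CommRing R] {i j : n}

theorem transvection_pow (h : i ≠ j) (c : R) (k : ℕ) :
    transvection i j c ^ k = transvection i j (k * c) := by
  induction k with
  | zero => simp
  | succ k ih =>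
    rw [pow_succ, ih, transvection_mul_transvection_same i j h, Nat.cast_succ, add_one_mul]

theorem mul_diag_eq_of_commute_transvection {c : R} {M : Matrix n n R}
    (hM : Commute (transvection i j c) M) : c * M j j = c * M i i := by
  have hij := congrFun (congrFun hM.eq i) j
  simp only [transvection_mul_apply_same, mul_transvection_apply_same] at hij
  exact add_left_cancel hij

def transvectionGL (h : i ≠ j) (c : R) : GL n R :=
  ⟨transvection i j c, transvection i j (-c),
    by rw [transvection_mul_transvection_same i j h, add_neg_cancel, transvection_zero],
    by rw [transvection_mul_transvection_same i j h, neg_add_cancel, transvection_zero]⟩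

@[simp]
theorem coe_transvectionGL (h : i ≠ j) (c : R) :
    (transvectionGL h c : Matrix n n R) = transvection i j c :=
  rfl

end Matrix

open Matrix

/-- Let `H` be the subgroup of `GL(5, ℤ)` of determinant-one matrices `A` with `A 0 0 = 1`,
`A 4 4 = 1`, the rest of column `0` vanishing and the rest of row `4` vanishing, and let
`u = diag(−1, 1, 1, 1, 1)`.  Then for every `g ∈ H`, the centralizer
`{h ∈ H : h (g u) = (g u) h}` has infinite index in `H`; in particular, the conjugacy class
of `g u` in the subgroup generated by `H` and `u` is infinite. -/
theorem infinite_index_centralizer_of_twisted_element_GL5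
    (H : Subgroup (GL (Fin 5) ℤ))
    (hH : ∀ A : GL (Fin 5) ℤ, A ∈ H ↔
      ((A : Matrix (Fin 5) (Fin 5) ℤ).det = 1 ∧
        (A : Matrix (Fin 5) (Fin 5) ℤ) 0 0 = 1 ∧
        (A : Matrix (Fin 5) (Fin 5) ℤ) 4 4 = 1 ∧
        (∀ i : Fin 5, i ≠ 0 → (A : Matrix (Fin 5) (Fin 5) ℤ) i 0 = 0) ∧
        (∀ j : Fin 5, j ≠ 4 → (A : Matrix (Fin 5) (Fin 5) ℤ) 4 j = 0)))
    (u : GL (Fin 5) ℤ)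
    (hu : ∀ i j : Fin 5, (u : Matrix (Fin 5) (Fin 5) ℤ) i j =
      if i = j then (if i = 0 then -1 else 1) else 0)
    (g : GL (Fin 5) ℤ) (hg : g ∈ H) :
    (Subgroup.comap H.subtype (Subgroup.centralizer {g * u})).index = 0 := by
  have h04 : (0 : Fin 5) ≠ 4 := by decide
  have hu_diag : (u : Matrix (Fin 5) (Fin 5) ℤ) = diagonal fun i => if i = 0 then -1 else 1 := by
    ext i j
    rw [hu, diagonal_apply]
  obtain ⟨-, hg00, hg44, -, -⟩ := (hH g).mp hg
  have ht : transvectionGL h04 (1 : ℤ) ∈ H := by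
    rw [hH, coe_transvectionGL, det_transvection_of_ne _ _ h04]
    refine ⟨rfl, by simp [transvection], by simp [transvection],
      fun i hi => by simp [transvection, one_apply, hi],
      fun j hj => by simp [transvection, one_apply, hj.symm]⟩
  by_contra hindex
  obtain ⟨n, hn, -, hmem⟩ := Subgroup.exists_pow_mem_of_index_ne_zero hindex ⟨_, ht⟩
  have hcomm :
      Commute (transvection 0 4 (n : ℤ)) ((g * u : GL (Fin 5) ℤ) : Matrix (Fin 5) (Fin 5) ℤ) := by
    have := congrArg Units.val (Subgroup.mem_centralizer_singleton_iff.mp hmem)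
    simpa [commute_iff_eq, transvection_pow h04] using this
  have hdiag : (n : ℤ) * 1 = n * -1 := by
    simpa [hu_diag, mul_diagonal, hg00, hg44] using mul_diag_eq_of_commute_transvection hcomm
  omega
end

section
/- Let (X, μ) be a standard Borel probability space, let S be an invertible measure-preserving Borel transformation of X, and let (T_n) be a sequence of measure-preserving Borel transformations of X such that μ(T_n⁻¹(A) △ A) → 0 for every measurable A ⊆ X. Then μ({x ∈ X : T_n(x) = S(x) and S(x) ≠ x}) → 0. (This generalizes the lemma that a sequence in the full group of an equivalence relation which asymptotically fixes every set cannot agree with a fixed element away from the diagonal on a set of positive measure.) -/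
open Filter Topology MeasureTheory
open scoped symmDiff

/-!
Fix a sequence `(A k)` of measurable sets separating the points of `X`. A point moved by `S` lies
in some `E k = A k ∆ S⁻¹(A k)`, and a point of `E k` where `T n` agrees with `S` lies in
`T n⁻¹(A k) ∆ A k`, whose measure tends to `0`. Since `μ` is finite, the part of `{S x ≠ x}`
outside `E 0 ∪ ⋯ ∪ E K` has small measure for large `K`, and the finitely many `E k` with `k ≤ K`
are handled by the hypothesis on `T n`.
-/

namespace Set

variable {X : Type*}

theorem setOf_ne_subset_iUnion_symmDiff_preimage {A : ℕ → Set X}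
    (hA : ∀ x y, (∀ k, x ∈ A k ↔ y ∈ A k) → x = y) (S : X → X) :
    {x | S x ≠ x} ⊆ ⋃ k, A k ∆ (S ⁻¹' A k) := by
  intro x hx
  by_contra hnot
  simp only [mem_iUnion, mem_symmDiff, mem_preimage, not_exists] at hnot
  exact hx (hA _ _ fun k => by have := hnot k; tauto)

theorem setOf_eq_inter_symmDiff_preimage_subset (T S : X → X) (A : Set X) :
    {x | T x = S x} ∩ A ∆ (S ⁻¹' A) ⊆ (T ⁻¹' A) ∆ A := by
  rintro x ⟨hx, hA⟩
  change T x = S x at hx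
  simp only [mem_symmDiff, mem_preimage, hx] at hA ⊢
  tauto

end Set

namespace MeasureTheory

variable {X : Type*} [MeasurableSpace X] {μ : Measure X} [IsFiniteMeasure μ]

theorem tendsto_measure_iUnion_diff_accumulate {E : ℕ → Set X}
    (hE : ∀ k, MeasurableSet (E k)) :
    Tendsto (fun K => μ ((⋃ k, E k) \ Set.accumulate E K)) atTop (𝓝 0) := by
  have hmeas : ∀ K, MeasurableSet ((⋃ k, E k) \ Set.accumulate E K) := fun K =>
    (MeasurableSet.iUnion hE).diff (MeasurableSet.biUnion (Set.to_countable _) fun k _ => hE k)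
  have hempty : (⋂ K, (⋃ k, E k) \ Set.accumulate E K) = ∅ := by
    rw [← Set.sdiff_iUnion, Set.iUnion_accumulate, Set.sdiff_self]
  simpa [hempty, Function.comp_def] using
    tendsto_measure_iInter_atTop (μ := μ) (fun K => (hmeas K).nullMeasurableSet)
      (fun _ _ hij => Set.sdiff_subset_sdiff_right (Set.monotone_accumulate hij))
      ⟨0, measure_ne_top μ _⟩

theorem tendsto_measure_zero_of_tendsto_measure_inter_zero
    {E : ℕ → Set X} (hE : ∀ k, MeasurableSet (E k)) {s : ℕ → Set X}
    (hs : ∀ n, s n ⊆ ⋃ k, E k) (h : ∀ k, Tendsto (fun n => μ (s n ∩ E k)) atTop (𝓝 0)) :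
    Tendsto (fun n => μ (s n)) atTop (𝓝 0) := by
  rw [ENNReal.tendsto_nhds_zero]
  intro ε hε
  obtain ⟨K, hK⟩ := (ENNReal.tendsto_nhds_zero.mp
    (tendsto_measure_iUnion_diff_accumulate (μ := μ) hE) (ε / 2) (ENNReal.half_pos hε.ne')).exists
  have hsum : Tendsto (fun n => ∑ k ∈ Finset.Iic K, μ (s n ∩ E k)) atTop (𝓝 0) := by
    simpa using tendsto_finsetSum (Finset.Iic K) fun k _ => h k
  have hcover : ∀ n,
      s n ⊆ ((⋃ k, E k) \ Set.accumulate E K) ∪ ⋃ k ∈ Finset.Iic K, s n ∩ E k := by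
    intro n x hx
    by_cases hxK : x ∈ Set.accumulate E K
    · obtain ⟨k, hkK, hk⟩ := Set.mem_accumulate.mp hxK
      exact Or.inr (Set.mem_biUnion (Finset.mem_Iic.mpr hkK) ⟨hx, hk⟩)
    · exact Or.inl ⟨hs n hx, hxK⟩
  filter_upwards [ENNReal.tendsto_nhds_zero.mp hsum (ε / 2) (ENNReal.half_pos hε.ne')] with n hn
  calc μ (s n)
      ≤ μ ((⋃ k, E k) \ Set.accumulate E K) + μ (⋃ k ∈ Finset.Iic K, s n ∩ E k) :=
        (measure_mono (hcover n)).trans (measure_union_le _ _)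
    _ ≤ ε / 2 + ∑ k ∈ Finset.Iic K, μ (s n ∩ E k) :=
        add_le_add hK (measure_biUnion_finset_le _ _)
    _ ≤ ε / 2 + ε / 2 := add_le_add le_rfl hn
    _ = ε := ENNReal.add_halves ε

end MeasureTheory

theorem tendsto_measure_agree_off_diagonal_general
    {X : Type*} [MeasurableSpace X] [StandardBorelSpace X]
    (μ : Measure X) [IsProbabilityMeasure μ]
    (S : X ≃ᵐ X)
    (T : ℕ → X → X)
    (hinv : ∀ A : Set X, MeasurableSet A →
      Tendsto (fun n => (μ ((T n ⁻¹' A) ∆ A)).toReal) atTop (𝓝 0)) :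
    Tendsto (fun n => (μ {x : X | T n x = S x ∧ S x ≠ x}).toReal) atTop (𝓝 0) := by
  obtain ⟨A, hAm, hA⟩ := exists_seq_separating X MeasurableSet.empty Set.univ
  have hcover : ∀ n, {x | T n x = S x ∧ S x ≠ x} ⊆ ⋃ k, A k ∆ (S ⁻¹' A k) := fun n x hx =>
    Set.setOf_ne_subset_iUnion_symmDiff_preimage (fun x y => hA x trivial y trivial) S hx.2
  have hpiece : ∀ n k, {x | T n x = S x ∧ S x ≠ x} ∩ A k ∆ (S ⁻¹' A k) ⊆ (T n ⁻¹' A k) ∆ A k :=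
    fun n k => (Set.inter_subset_inter_left _ fun x hx => hx.1).trans
      (Set.setOf_eq_inter_symmDiff_preimage_subset (T n) S (A k))
  rw [ENNReal.tendsto_toReal_zero_iff]
  refine tendsto_measure_zero_of_tendsto_measure_inter_zero
    (fun k => (hAm k).symmDiff (S.measurable (hAm k))) hcover fun k => ?_
  exact tendsto_of_tendsto_of_tendsto_of_le_of_le tendsto_const_nhds
    ((ENNReal.tendsto_toReal_zero_iff).mp (hinv (A k) (hAm k))) (fun _ => zero_le)
    fun n => measure_mono (hpiece n k)

/-- Let `(X, μ)` be a standard Borel probability space, `S` an invertible measure-preserving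
Borel transformation of `X`, and `(T n)` a sequence of measure-preserving Borel
transformations of `X` such that `μ (T n ⁻¹' A ∆ A) → 0` for every measurable `A ⊆ X`.
Then `μ {x : T n x = S x ∧ S x ≠ x} → 0`. -/
theorem tendsto_measure_agree_off_diagonal
    {X : Type*} [MeasurableSpace X] [StandardBorelSpace X]
    (μ : Measure X) [IsProbabilityMeasure μ]
    (S : X ≃ᵐ X) (hS : MeasurePreserving S μ μ)
    (T : ℕ → X → X) (hT : ∀ n, MeasurePreserving (T n) μ μ)
    (hinv : ∀ A : Set X, MeasurableSet A →
      Tendsto (fun n => (μ ((T n ⁻¹' A) ∆ A)).toReal) atTop (𝓝 0)) :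
    Tendsto (fun n => (μ {x : X | T n x = S x ∧ S x ≠ x}).toReal) atTop (𝓝 0) :=
  tendsto_measure_agree_off_diagonal_general μ S T hinv
end
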